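/- arXiv:2303.07782 — 11 statements merged into one kernel-verified Lean document; each statement's English description precedes it below -/
import Mathlib

section
/- Ubiquity of disclosures: Let P_{Y|X} be a mechanism, U an attribute of X given by P_{U|X}, and q a full-support prior on 𝒳. If P_{Y|X} discloses U to q, then P_{Y|X} discloses U to every full-support prior r on 𝒳; moreover, if for some y with q_Y(y) > 0 the posterior q_{U|Y=y} is a point mass at u* ∈ 𝒰, then for every full-support prior r the posterior r_{U|Y=y} is also a point mass at u*. -/
open Finset

/-- A probability mass function on a finite type. -/
def IsPMF {α : Type*} [Fintype α] (p : α → ℝ) : Prop :=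
  (∀ a, 0 ≤ p a) ∧ ∑ a, p a = 1

/-- Maximum value of a function on a finite nonempty type. -/
noncomputable def maxVal {α : Type*} [Fintype α] [Nonempty α] (p : α → ℝ) : ℝ :=
  Finset.univ.sup' Finset.univ_nonempty p

/-- Minimum value of a function on a finite nonempty type. -/
noncomputable def minVal {α : Type*} [Fintype α] [Nonempty α] (p : α → ℝ) : ℝ :=
  Finset.univ.inf' Finset.univ_nonempty p

/-- Min-entropy `H_∞(p) = -log (max_a p a)`. -/
noncomputable def minEntropy {α : Type*} [Fintype α] [Nonempty α] (p : α → ℝ) : ℝ :=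
  - Real.log (maxVal p)

/-- Output marginal `q_Y(y) = ∑ x, p_{Y|X=x}(y) q(x)`. -/
noncomputable def outMarginal {𝒳 𝒴 : Type*} [Fintype 𝒳] (P : 𝒳 → 𝒴 → ℝ)
    (q : 𝒳 → ℝ) (y : 𝒴) : ℝ :=
  ∑ x, P x y * q x

/-- Posterior on `𝒳` given outcome `y`. -/
noncomputable def posteriorX {𝒳 𝒴 : Type*} [Fintype 𝒳] (P : 𝒳 → 𝒴 → ℝ)
    (q : 𝒳 → ℝ) (y : 𝒴) (x : 𝒳) : ℝ :=
  P x y * q x / outMarginal P q y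

/-- Prior of the attribute `U` induced by the kernel `PU` and the prior `q`. -/
noncomputable def attrPrior {𝒳 𝒰 : Type*} [Fintype 𝒳] (PU : 𝒳 → 𝒰 → ℝ)
    (q : 𝒳 → ℝ) (u : 𝒰) : ℝ :=
  ∑ x, PU x u * q x

/-- Posterior of the attribute `U` given outcome `y`. -/
noncomputable def posteriorU {𝒳 𝒴 𝒰 : Type*} [Fintype 𝒳] (P : 𝒳 → 𝒴 → ℝ)
    (PU : 𝒳 → 𝒰 → ℝ) (q : 𝒳 → ℝ) (y : 𝒴) (u : 𝒰) : ℝ :=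
  ∑ x, PU x u * posteriorX P q y x

/-- Pointwise maximal leakage `ℓ_q(X → y) = log (max_x p_{Y|X=x}(y) / q_Y(y))`. -/
noncomputable def pml {𝒳 𝒴 : Type*} [Fintype 𝒳] [Nonempty 𝒳] (P : 𝒳 → 𝒴 → ℝ)
    (q : 𝒳 → ℝ) (y : 𝒴) : ℝ :=
  Real.log (maxVal (fun x => P x y) / outMarginal P q y)

/-- The mechanism `P` discloses the attribute `U` (given by `PU`) to the prior `q`:
there is an outcome `y` with positive marginal whose posterior on `U` has zero min-entropy. -/
def Discloses {𝒳 𝒴 𝒰 : Type*} [Fintype 𝒳] [Fintype 𝒰] [Nonempty 𝒰]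
    (P : 𝒳 → 𝒴 → ℝ) (PU : 𝒳 → 𝒰 → ℝ) (q : 𝒳 → ℝ) : Prop :=
  ∃ y, 0 < outMarginal P q y ∧ minEntropy (posteriorU P PU q y) = 0

/-- The mechanism `P` satisfies `(ε, q)`-PML. -/
def SatisfiesPML {𝒳 𝒴 : Type*} [Fintype 𝒳] [Nonempty 𝒳] (P : 𝒳 → 𝒴 → ℝ)
    (q : 𝒳 → ℝ) (ε : ℝ) : Prop :=
  ∀ y, 0 < outMarginal P q y → pml P q y ≤ ε

/-- **Ubiquity of disclosures.** If a mechanism discloses an attribute `U` to one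
full-support prior, then it discloses `U` to every full-support prior; moreover any
outcome whose posterior on `U` is a point mass at `u*` under one full-support prior
has posterior a point mass at the same `u*` under every full-support prior. -/
theorem ubiquity_of_disclosures
    {𝒳 𝒴 𝒰 : Type*} [Fintype 𝒳] [Fintype 𝒴] [Fintype 𝒰]
    [Nonempty 𝒳] [Nonempty 𝒴] [Nonempty 𝒰]
    (P : 𝒳 → 𝒴 → ℝ) (hP : ∀ x, IsPMF (P x))
    (PU : 𝒳 → 𝒰 → ℝ) (hPU : ∀ x, IsPMF (PU x))
    (q : 𝒳 → ℝ) (hq : IsPMF q) (hqfs : ∀ x, 0 < q x)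
    (hdisc : Discloses P PU q) :
    (∀ r : 𝒳 → ℝ, IsPMF r → (∀ x, 0 < r x) → Discloses P PU r) ∧
    (∀ (y : 𝒴) (u₀ : 𝒰), 0 < outMarginal P q y → posteriorU P PU q y u₀ = 1 →
      ∀ r : 𝒳 → ℝ, IsPMF r → (∀ x, 0 < r x) → posteriorU P PU r y u₀ = 1) := by
  have hPnn : ∀ x y, 0 ≤ P x y := fun x y => (hP x).1 y
  have hPUnn : ∀ x u, 0 ≤ PU x u := fun x u => (hPU x).1 u
  have hPUle1 : ∀ x u, PU x u ≤ 1 := by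
    intro x u
    calc PU x u ≤ ∑ u', PU x u' :=
          Finset.single_le_sum (fun u' _ => hPUnn x u') (mem_univ u)
      _ = 1 := (hPU x).2
  have hMnn : ∀ (r : 𝒳 → ℝ), (∀ x, 0 ≤ r x) → ∀ y, 0 ≤ outMarginal P r y := by
    intro r hr y
    exact Finset.sum_nonneg (fun x _ => mul_nonneg (hPnn x y) (hr x))
  have hpostnn : ∀ (r : 𝒳 → ℝ), (∀ x, 0 ≤ r x) → ∀ y x, 0 ≤ posteriorX P r y x := by
    intro r hr y x
    exact div_nonneg (mul_nonneg (hPnn x y) (hr x)) (hMnn r hr y)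
  have hsumpostX : ∀ (r : 𝒳 → ℝ) (y : 𝒴), 0 < outMarginal P r y →
      ∑ x, posteriorX P r y x = 1 := by
    intro r y hM
    unfold posteriorX
    rw [← Finset.sum_div]
    exact div_self (ne_of_gt hM)
  have hUle : ∀ (r : 𝒳 → ℝ), (∀ x, 0 ≤ r x) → ∀ (y : 𝒴), 0 < outMarginal P r y →
      ∀ u, posteriorU P PU r y u ≤ 1 := by
    intro r hr y hM u
    calc posteriorU P PU r y u ≤ ∑ x, posteriorX P r y x := by
          apply Finset.sum_le_sum
          intro x _
          have h1 := hpostnn r hr y x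
          nlinarith [hPUle1 x u, hPUnn x u]
      _ = 1 := hsumpostX r y hM
  have key : ∀ (y : 𝒴) (u₀ : 𝒰), 0 < outMarginal P q y → posteriorU P PU q y u₀ = 1 →
      ∀ r : 𝒳 → ℝ, IsPMF r → (∀ x, 0 < r x) →
      0 < outMarginal P r y ∧ posteriorU P PU r y u₀ = 1 := by
    intro y u₀ hM h1 r hr hrfs
    obtain ⟨x0, -, hx0⟩ : ∃ x ∈ univ, 0 < P x y * q x := by
      by_contra h
      push_neg at h
      have : outMarginal P q y ≤ 0 := Finset.sum_nonpos (fun x hx => h x hx)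
      linarith
    have hPx0 : 0 < P x0 y := by
      rcases (hPnn x0 y).lt_or_eq with h | h
      · exact h
      · exfalso; rw [← h] at hx0; simp at hx0
    have hMr : 0 < outMarginal P r y := by
      apply Finset.sum_pos' (fun x _ => mul_nonneg (hPnn x y) (hr.1 x))
      exact ⟨x0, mem_univ x0, mul_pos hPx0 (hrfs x0)⟩
    have hterm : ∀ x ∈ (univ : Finset 𝒳),
        PU x u₀ * posteriorX P q y x = posteriorX P q y x := by
      have hle : ∀ x ∈ (univ : Finset 𝒳),
          PU x u₀ * posteriorX P q y x ≤ posteriorX P q y x := by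
        intro x _
        have h1 := hpostnn q (fun x => (hqfs x).le) y x
        nlinarith [hPUle1 x u₀, hPUnn x u₀]
      refine (Finset.sum_eq_sum_iff_of_le hle).1 ?_
      rw [hsumpostX q y hM]
      exact h1
    have hPU1 : ∀ x, 0 < P x y → PU x u₀ = 1 := by
      intro x hx
      have hpost : 0 < posteriorX P q y x :=
        div_pos (mul_pos hx (hqfs x)) hM
      have h2 : (PU x u₀ - 1) * posteriorX P q y x = 0 := by
        rw [sub_mul, one_mul, hterm x (mem_univ x), sub_self]
      rcases mul_eq_zero.1 h2 with h | h
      · linarith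
      · exact absurd h (ne_of_gt hpost)
    refine ⟨hMr, ?_⟩
    have hcongr : ∑ x, PU x u₀ * (P x y * r x / outMarginal P r y)
        = ∑ x, P x y * r x / outMarginal P r y := by
      apply Finset.sum_congr rfl
      intro x _
      rcases (hPnn x y).lt_or_eq with h | h
      · rw [hPU1 x h, one_mul]
      · rw [← h]; ring
    show ∑ x, PU x u₀ * posteriorX P r y x = 1
    unfold posteriorX
    rw [hcongr, ← Finset.sum_div]
    exact div_self (ne_of_gt hMr)
  refine ⟨?_, fun y u₀ hM h1 r hr hrfs => (key y u₀ hM h1 r hr hrfs).2⟩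
  intro r hr hrfs
  obtain ⟨y, hM, hent⟩ := hdisc
  have hsumU : ∑ u, posteriorU P PU q y u = 1 := by
    unfold posteriorU
    rw [Finset.sum_comm]
    have : ∀ x, ∑ u, PU x u * posteriorX P q y x = posteriorX P q y x := by
      intro x
      rw [← Finset.sum_mul, (hPU x).2, one_mul]
    simp only [this]
    exact hsumpostX q y hM
  have hUnn : ∀ u, 0 ≤ posteriorU P PU q y u := by
    intro u
    exact Finset.sum_nonneg fun x _ =>
      mul_nonneg (hPUnn x u) (hpostnn q (fun x => (hqfs x).le) y x)
  obtain ⟨u₁, -, hu₁⟩ : ∃ u ∈ univ, 0 < posteriorU P PU q y u := by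
    by_contra h
    push_neg at h
    have : ∑ u, posteriorU P PU q y u ≤ 0 := Finset.sum_nonpos fun u hu => h u hu
    linarith
  have hmaxpos : 0 < maxVal (posteriorU P PU q y) :=
    lt_of_lt_of_le hu₁ (Finset.le_sup' _ (mem_univ u₁))
  have hmax1 : maxVal (posteriorU P PU q y) = 1 := by
    unfold minEntropy at hent
    have hlog : Real.log (maxVal (posteriorU P PU q y)) = 0 := by linarith
    rcases Real.log_eq_zero.1 hlog with h | h | h
    · exact absurd h (ne_of_gt hmaxpos)
    · exact h
    · exfalso; linarith
  obtain ⟨u₀, -, hu₀⟩ := Finset.exists_mem_eq_sup' (Finset.univ_nonempty)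
    (posteriorU P PU q y)
  have hq1 : posteriorU P PU q y u₀ = 1 := by
    rw [show posteriorU P PU q y u₀ = maxVal (posteriorU P PU q y) from hu₀.symm, hmax1]
  obtain ⟨hMr, hr1⟩ := key y u₀ hM hq1 r hr hrfs
  refine ⟨y, hMr, ?_⟩
  have hmaxr : maxVal (posteriorU P PU r y) = 1 := by
    apply le_antisymm
    · exact Finset.sup'_le _ _ fun u _ => hUle r (fun x => (hrfs x).le) y hMr u
    · rw [← hr1]
      exact Finset.le_sup' _ (mem_univ u₀)
  unfold minEntropy
  rw [hmaxr, Real.log_one, neg_zero]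
end

section
/- Absolute disclosure prevention, part (i): If the mechanism P_{Y|X} has finite leakage capacity C(P_{Y|X}) < ∞, then for every full-support prior q on 𝒳 and every attribute U of X whose prior q_U under q is not a point mass, the mechanism P_{Y|X} does not disclose U to q. -/
open Finset

/-- **Absolute disclosure prevention, part (i).** If the mechanism has finite leakage
capacity (i.e. for every `y`, positivity of `p_{Y|X=x}(y)` for some `x` implies positivity
for all `x`), then for every full-support prior `q` and every attribute `U` whose prior
under `q` is not a point mass, the mechanism does not disclose `U` to `q`. -/
theorem absolute_disclosure_prevention_finite_capacity
    {𝒳 𝒴 𝒰 : Type*} [Fintype 𝒳] [Fintype 𝒴] [Fintype 𝒰]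
    [Nonempty 𝒳] [Nonempty 𝒴] [Nonempty 𝒰]
    (P : 𝒳 → 𝒴 → ℝ) (hP : ∀ x, IsPMF (P x))
    (hcap : ∀ y : 𝒴, (∃ x, 0 < P x y) → ∀ x, 0 < P x y)
    (q : 𝒳 → ℝ) (hq : IsPMF q) (hqfs : ∀ x, 0 < q x)
    (PU : 𝒳 → 𝒰 → ℝ) (hPU : ∀ x, IsPMF (PU x))
    (hnotpoint : ∀ u, attrPrior PU q u ≠ 1) :
    ¬ Discloses P PU q := by
  rintro ⟨y, hy, hment⟩
  -- all P x y positive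
  have hex : ∃ x, 0 < P x y := by
    by_contra h
    push_neg at h
    have : outMarginal P q y ≤ 0 := by
      apply Finset.sum_nonpos
      intro x _
      exact mul_nonpos_of_nonpos_of_nonneg (h x) (hqfs x).le
    linarith
  have hPy : ∀ x, 0 < P x y := hcap y hex
  have hpX : ∀ x, 0 < posteriorX P q y x := fun x =>
    div_pos (mul_pos (hPy x) (hqfs x)) hy
  have hsumX : ∑ x, posteriorX P q y x = 1 := by
    unfold posteriorX outMarginal
    rw [← Finset.sum_div]
    exact div_self hy.ne'
  -- each PU x u ≤ 1
  have hPUle : ∀ x u, PU x u ≤ 1 := by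
    intro x u
    calc PU x u ≤ ∑ u', PU x u' :=
      Finset.single_le_sum (fun u' _ => (hPU x).1 u') (Finset.mem_univ u)
    _ = 1 := (hPU x).2
  -- posteriorU sums to 1 over u
  have hsumU : ∑ u, posteriorU P PU q y u = 1 := by
    unfold posteriorU
    rw [Finset.sum_comm]
    calc ∑ x, ∑ u, PU x u * posteriorX P q y x
        = ∑ x, posteriorX P q y x := by
          apply Finset.sum_congr rfl
          intro x _
          rw [← Finset.sum_mul, (hPU x).2, one_mul]
      _ = 1 := hsumX
  have hUnonneg : ∀ u, 0 ≤ posteriorU P PU q y u := fun u =>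
    Finset.sum_nonneg fun x _ => mul_nonneg ((hPU x).1 u) (hpX x).le
  -- each posteriorU u < 1
  have hlt : ∀ u, posteriorU P PU q y u < 1 := by
    intro u
    obtain ⟨x0, hx0⟩ : ∃ x0, PU x0 u < 1 := by
      by_contra h
      push_neg at h
      have hall : ∀ x, PU x u = 1 := fun x => le_antisymm (hPUle x u) (h x)
      apply hnotpoint u
      unfold attrPrior
      simp only [hall, one_mul]
      exact hq.2
    calc posteriorU P PU q y u = ∑ x, PU x u * posteriorX P q y x := rfl
      _ < ∑ x, 1 * posteriorX P q y x := by
          apply Finset.sum_lt_sum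
          · intro x _
            exact mul_le_mul_of_nonneg_right (hPUle x u) (hpX x).le
          · exact ⟨x0, Finset.mem_univ x0, by
              exact mul_lt_mul_of_pos_right hx0 (hpX x0)⟩
      _ = 1 := by simp [hsumX]
  -- maxVal < 1 and > 0
  have hmax_lt : maxVal (posteriorU P PU q y) < 1 := by
    rw [maxVal, Finset.sup'_lt_iff]
    exact fun u _ => hlt u
  have hmax_pos : 0 < maxVal (posteriorU P PU q y) := by
    obtain ⟨u0, hu0⟩ : ∃ u0, 0 < posteriorU P PU q y u0 := by
      by_contra h
      push_neg at h
      have : ∑ u, posteriorU P PU q y u ≤ 0 :=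
        Finset.sum_nonpos fun u _ => h u
      linarith [hsumU]
    exact lt_of_lt_of_le hu0 (Finset.le_sup' _ (Finset.mem_univ u0))
  have : Real.log (maxVal (posteriorU P PU q y)) < 0 :=
    Real.log_neg hmax_pos hmax_lt
  unfold minEntropy at hment
  linarith
end

section
/- Absolute disclosure prevention, part (ii): Suppose the mechanism P_{Y|X} has finite leakage capacity C := C(P_{Y|X}) < ∞. Let 𝒱 be a finite set and V : 𝒳 → 𝒱 a non-constant function, regarded as a deterministic attribute of X (P_{V|X=x} is the point mass at V(x)). Then for every full-support prior q on 𝒳 and every y with q_Y(y) > 0, H_∞(q_{V|Y=y}) ≥ log( 1 + (min_{x∈𝒳} q(x) / (1 − min_{x∈𝒳} q(x))) · e^{−C} ). -/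
open Finset

/-- **Absolute disclosure prevention, part (ii).** Suppose `C` bounds the leakage capacity
of the mechanism, i.e. `p_{Y|X=x}(y) ≤ e^C · p_{Y|X=x'}(y)` for all `y, x, x'` (this holds
with `C = C(P_{Y|X})` when the capacity is finite). Then for every non-constant
deterministic attribute `V : 𝒳 → 𝒱`, every full-support prior `q`, and every outcome `y`
with positive marginal,
`H_∞(q_{V|Y=y}) ≥ log (1 + (min_x q(x) / (1 − min_x q(x))) · e^{−C})`. -/
theorem absolute_disclosure_prevention_entropy_bound
    {𝒳 𝒴 𝒱 : Type*} [Fintype 𝒳] [Fintype 𝒴] [Fintype 𝒱] [DecidableEq 𝒱]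
    [Nonempty 𝒳] [Nonempty 𝒴] [Nonempty 𝒱]
    (P : 𝒳 → 𝒴 → ℝ) (hP : ∀ x, IsPMF (P x))
    (C : ℝ) (hC : ∀ (y : 𝒴) (x x' : 𝒳), P x y ≤ Real.exp C * P x' y)
    (V : 𝒳 → 𝒱) (hV : ∃ x x', V x ≠ V x')
    (q : 𝒳 → ℝ) (hq : IsPMF q) (hqfs : ∀ x, 0 < q x)
    (y : 𝒴) (hy : 0 < outMarginal P q y) :
    minEntropy (posteriorU P (fun x v => if V x = v then (1 : ℝ) else 0) q y) ≥
      Real.log (1 + (minVal q / (1 - minVal q)) * Real.exp (-C)) := by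
  classical
  have hq1 : ∑ x, q x = 1 := hq.2
  have hexpC : (0:ℝ) < Real.exp C := Real.exp_pos C
  -- some x1 with positive term
  obtain ⟨x1, -, hx1⟩ : ∃ x ∈ Finset.univ, 0 < P x y * q x := by
    by_contra h
    push_neg at h
    have : outMarginal P q y ≤ 0 := Finset.sum_nonpos (fun x hx => h x hx)
    linarith
  have hPx1 : 0 < P x1 y := by
    rcases mul_pos_iff.mp hx1 with ⟨h, _⟩ | ⟨_, h⟩
    · exact h
    · exact absurd (hqfs x1) (by linarith)
  have hPpos : ∀ x, 0 < P x y := by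
    intro x
    have h := hC y x1 x
    nlinarith [( hP x).1 y]
  -- min of q
  set m := minVal q with hm
  have hmle : ∀ x, m ≤ q x := fun x => Finset.inf'_le _ (Finset.mem_univ x)
  have hm0 : 0 < m := by
    rw [hm, minVal, Finset.lt_inf'_iff]
    exact fun x _ => hqfs x
  obtain ⟨xa, xb, hab⟩ := hV
  have hne : xa ≠ xb := fun h => hab (by rw [h])
  have hsumab : q xa + q xb ≤ 1 := by
    have : ∑ x ∈ ({xa, xb} : Finset 𝒳), q x ≤ ∑ x, q x :=
      Finset.sum_le_sum_of_subset_of_nonneg (Finset.subset_univ _)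
        (fun x _ _ => (hqfs x).le)
    rwa [Finset.sum_pair hne, hq1] at this
  have hm1 : m < 1 := lt_of_le_of_lt (hmle xa) (by have := hqfs xb; linarith)
  set t := m / (1 - m) * Real.exp (-C) with hT
  have ht : 0 < t := by
    apply mul_pos (div_pos hm0 (by linarith)) (Real.exp_pos _)
  set M := outMarginal P q y with hM
  -- key bound on each posterior value
  have key : ∀ v, posteriorU P (fun x v => if V x = v then (1 : ℝ) else 0) q y v
      ≤ 1 / (1 + t) := by
    intro v
    -- find x0 with V x0 ≠ v
    obtain ⟨x0, hx0⟩ : ∃ x0, V x0 ≠ v := by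
      by_cases h : V xa = v
      · exact ⟨xb, fun hb => hab (by rw [h, hb])⟩
      · exact ⟨xa, h⟩
    have hpost : posteriorU P (fun x v => if V x = v then (1 : ℝ) else 0) q y v
        = (∑ x ∈ Finset.univ.filter (fun x => V x = v), P x y * q x) / M := by
      rw [posteriorU, Finset.sum_filter, Finset.sum_div]
      apply Finset.sum_congr rfl
      intro x _
      by_cases h : V x = v <;> simp [h, posteriorX, hM]
    set A := ∑ x ∈ Finset.univ.filter (fun x => V x = v), P x y * q x with hA
    set B := ∑ x ∈ Finset.univ.filter (fun x => ¬ V x = v), P x y * q x with hB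
    have hAB : A + B = M := by
      rw [hA, hB, hM, outMarginal, Finset.sum_filter_add_sum_filter_not]
    have hA0 : 0 ≤ A :=
      Finset.sum_nonneg fun x _ => mul_nonneg ((hP x).1 y) (hqfs x).le
    have hBge : m * P x0 y ≤ B := by
      have hmem : x0 ∈ Finset.univ.filter (fun x => ¬ V x = v) := by
        simp [hx0]
      have := Finset.single_le_sum
        (f := fun x => P x y * q x)
        (fun x _ => mul_nonneg ((hP x).1 y) (hqfs x).le) hmem
      calc m * P x0 y ≤ P x0 y * q x0 := by nlinarith [hmle x0, hPpos x0]
        _ ≤ B := by simpa using this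
    have hAle : A ≤ Real.exp C * P x0 y * (1 - m) := by
      have h1 : A ≤ ∑ x ∈ Finset.univ.filter (fun x => V x = v),
          Real.exp C * P x0 y * q x := by
        apply Finset.sum_le_sum
        intro x _
        exact mul_le_mul_of_nonneg_right (hC y x x0) (hqfs x).le
      have h2 : ∑ x ∈ Finset.univ.filter (fun x => V x = v),
          Real.exp C * P x0 y * q x
          = Real.exp C * P x0 y * ∑ x ∈ Finset.univ.filter (fun x => V x = v), q x := by
        rw [Finset.mul_sum]
      have hsub : Finset.univ.filter (fun x => V x = v) ⊆ Finset.univ.erase x0 := by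
        intro x hx
        simp only [Finset.mem_filter] at hx
        refine Finset.mem_erase.mpr ⟨?_, Finset.mem_univ x⟩
        rintro rfl
        exact hx0 hx.2
      have h3 : ∑ x ∈ Finset.univ.filter (fun x => V x = v), q x
          ≤ ∑ x ∈ Finset.univ.erase x0, q x :=
        Finset.sum_le_sum_of_subset_of_nonneg hsub (fun x _ _ => (hqfs x).le)
      have h4 : ∑ x ∈ Finset.univ.erase x0, q x = 1 - q x0 := by
        have := Finset.add_sum_erase Finset.univ q (Finset.mem_univ x0)
        rw [hq1] at this
        linarith
      have h5 : ∑ x ∈ Finset.univ.filter (fun x => V x = v), q x ≤ 1 - m := by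
        have := hmle x0; linarith
      calc A ≤ Real.exp C * P x0 y * ∑ x ∈ Finset.univ.filter (fun x => V x = v), q x := by
              rw [← h2]; exact h1
        _ ≤ Real.exp C * P x0 y * (1 - m) := by
              exact mul_le_mul_of_nonneg_left h5 (mul_nonneg hexpC.le (hPpos x0).le)
    -- A * t ≤ B
    have hAt : A * t ≤ B := by
      have h1m : (0:ℝ) < 1 - m := by linarith
      have key2 : A * t ≤ m * P x0 y := by
        rw [hT]
        calc A * (m / (1 - m) * Real.exp (-C))
            ≤ (Real.exp C * P x0 y * (1 - m)) * (m / (1 - m) * Real.exp (-C)) :=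
              mul_le_mul_of_nonneg_right hAle (by positivity)
          _ = m * P x0 y * (Real.exp C * Real.exp (-C)) := by
              field_simp
          _ = m * P x0 y := by rw [← Real.exp_add]; simp
      linarith
    rw [hpost, ← hAB]
    rw [div_le_div_iff₀ (by rw [hAB]; exact hy) (by linarith)]
    nlinarith
  -- positivity of the max
  set f := posteriorU P (fun x v => if V x = v then (1 : ℝ) else 0) q y with hf
  have hfnn : ∀ v, 0 ≤ f v := by
    intro v
    apply Finset.sum_nonneg
    intro x _
    apply mul_nonneg (by positivity)
    exact div_nonneg (mul_nonneg ((hP x).1 y) (hqfs x).le) hy.le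
  have hmaxle : maxVal f ≤ 1 / (1 + t) := by
    rw [maxVal]
    exact Finset.sup'_le _ _ fun v _ => key v
  have hmaxpos : 0 < maxVal f := by
    have h1 : posteriorX P q y x1 ≤ f (V x1) := by
      have := Finset.single_le_sum
        (f := fun x => (if V x = V x1 then (1:ℝ) else 0) * posteriorX P q y x)
        (fun x _ => mul_nonneg (by positivity)
          (div_nonneg (mul_nonneg ((hP x).1 y) (hqfs x).le) hy.le))
        (Finset.mem_univ x1)
      simpa [hf, posteriorU] using this
    have h2 : 0 < posteriorX P q y x1 := by
      rw [posteriorX]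
      exact div_pos hx1 hy
    have h3 : f (V x1) ≤ maxVal f := Finset.le_sup' f (Finset.mem_univ (V x1))
    linarith
  -- conclude
  rw [minEntropy, ge_iff_le]
  have hlog : Real.log (maxVal f) ≤ Real.log (1 / (1 + t)) :=
    Real.log_le_log hmaxpos hmaxle
  rw [one_div, Real.log_inv] at hlog
  linarith
end

section
/- Smallest disclosure threshold, part (ii): Suppose 𝒳 has at least two elements, P_X is a full-support prior on 𝒳, and p_min = min_{x∈𝒳} P_X(x). Then for every ε ≥ log(1/(1 − p_min)) there exist a finite nonempty set 𝒴, a mechanism P_{Y|X} from 𝒳 to 𝒴, a finite set 𝒰, and an attribute U of X given by a conditional pmf P_{U|X}, such that P_{Y|X} satisfies (ε, P_X)-PML and P_{Y|X} discloses the value of U to P_X. -/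
open Finset

/-! Let `x₀` carry the least prior mass `m`. The mechanism never outputs `true` on `x₀` and
outputs it with probability `m` elsewhere, so `true` discloses the attribute `[X = x₀]`.
The leakage of `true` is
`log (m / (m (1 - m))) = log (1 / (1 - m))`, and the leakage of `false` is
`log (1 / (1 - m + m²))`, which is smaller. -/

lemma maxVal_eq_of_forall_le {α : Type*} [Fintype α] [Nonempty α] {p : α → ℝ} {c : ℝ}
    (hle : ∀ a, p a ≤ c) (a : α) (ha : p a = c) : maxVal p = c :=
  le_antisymm (Finset.sup'_le _ _ fun b _ => hle b) (ha ▸ Finset.le_sup' p (Finset.mem_univ a))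

lemma exists_eq_minVal {α : Type*} [Fintype α] [Nonempty α] (p : α → ℝ) :
    ∃ a, minVal p = p a := by
  obtain ⟨a, -, ha⟩ := Finset.exists_mem_eq_inf' Finset.univ_nonempty p
  exact ⟨a, ha⟩

lemma IsPMF.lt_one {α : Type*} [Fintype α] {q : α → ℝ} (hq : IsPMF q) {a b : α} (hab : a ≠ b)
    (hb : 0 < q b) : q a < 1 := by
  classical
  have hpair : q a + q b ≤ 1 := by
    rw [← Finset.sum_pair hab, ← hq.2]
    exact Finset.sum_le_univ_sum_of_nonneg hq.1
  linarith

lemma minEntropy_eq_zero {α : Type*} [Fintype α] [Nonempty α] {p : α → ℝ} (hle : ∀ a, p a ≤ 1)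
    (a : α) (ha : p a = 1) : minEntropy p = 0 := by
  rw [minEntropy, maxVal_eq_of_forall_le hle a ha, Real.log_one, neg_zero]

lemma SatisfiesPML.mono {𝒳 𝒴 : Type*} [Fintype 𝒳] [Nonempty 𝒳] {P : 𝒳 → 𝒴 → ℝ} {q : 𝒳 → ℝ}
    {ε ε' : ℝ} (h : SatisfiesPML P q ε) (hε : ε ≤ ε') : SatisfiesPML P q ε' :=
  fun y hy => (h y hy).trans hε

section Disclosure

variable {𝒳 𝒴 𝒰 : Type*} [DecidableEq 𝒰]

def detKernel (f : 𝒳 → 𝒰) (x : 𝒳) (u : 𝒰) : ℝ :=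
  if f x = u then 1 else 0

lemma isPMF_detKernel [Fintype 𝒰] (f : 𝒳 → 𝒰) (x : 𝒳) : IsPMF (detKernel f x) :=
  ⟨fun u => by unfold detKernel; split_ifs <;> norm_num, by simp [detKernel]⟩

lemma sum_posteriorX [Fintype 𝒳] {P : 𝒳 → 𝒴 → ℝ} {q : 𝒳 → ℝ} {y : 𝒴}
    (hy : outMarginal P q y ≠ 0) :
    ∑ x, posteriorX P q y x = 1 := by
  simp only [posteriorX, ← Finset.sum_div]
  exact div_self hy

lemma discloses_detKernel [Fintype 𝒳] [Fintype 𝒰] [Nonempty 𝒰] {P : 𝒳 → 𝒴 → ℝ} {q : 𝒳 → ℝ}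
    (f : 𝒳 → 𝒰) {y : 𝒴} {u₀ : 𝒰} (hy : 0 < outMarginal P q y) (hP : ∀ x, f x ≠ u₀ → P x y = 0) :
    Discloses P (detKernel f) q := by
  have hoff : ∀ x, f x ≠ u₀ → posteriorX P q y x = 0 := fun x hx => by
    simp [posteriorX, hP x hx]
  have hfibre : posteriorU P (detKernel f) q y u₀ = 1 := by
    rw [← sum_posteriorX hy.ne']
    refine Finset.sum_congr rfl fun x _ => ?_
    by_cases hx : f x = u₀
    · simp [detKernel, hx]
    · simp [hoff x hx]
  have hother : ∀ u ≠ u₀, posteriorU P (detKernel f) q y u = 0 := fun u hu => by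
    refine Finset.sum_eq_zero fun x _ => ?_
    by_cases hx : f x = u
    · simp [hoff x (hx ▸ hu)]
    · simp [detKernel, hx]
  refine ⟨y, hy, minEntropy_eq_zero (fun u => ?_) u₀ hfibre⟩
  by_cases hu : u = u₀
  · exact (hu ▸ hfibre).le
  · exact (hother u hu).trans_le zero_le_one

end Disclosure

section BinaryMechanism

variable {𝒳 : Type*}

def binaryMechanism (s : 𝒳 → ℝ) (x : 𝒳) (b : Bool) : ℝ :=
  if b then s x else 1 - s x

lemma isPMF_binaryMechanism {s : 𝒳 → ℝ} {x : 𝒳} (h0 : 0 ≤ s x) (h1 : s x ≤ 1) :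
    IsPMF (binaryMechanism s x) :=
  ⟨fun b => by cases b <;> simp [binaryMechanism, h0, h1], by simp [binaryMechanism]⟩

lemma outMarginal_binaryMechanism_true [Fintype 𝒳] (s q : 𝒳 → ℝ) :
    outMarginal (binaryMechanism s) q true = ∑ x, s x * q x := rfl

lemma outMarginal_binaryMechanism_false [Fintype 𝒳] (s : 𝒳 → ℝ) {q : 𝒳 → ℝ}
    (hq : ∑ x, q x = 1) :
    outMarginal (binaryMechanism s) q false = 1 - ∑ x, s x * q x := by
  simp [outMarginal, binaryMechanism, sub_mul, hq]

variable [DecidableEq 𝒳]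

def avoidingMechanism (x₀ : 𝒳) (t : ℝ) : 𝒳 → Bool → ℝ :=
  binaryMechanism fun x => if x = x₀ then 0 else t

lemma isPMF_avoidingMechanism (x₀ : 𝒳) {t : ℝ} (h0 : 0 ≤ t) (h1 : t ≤ 1) (x : 𝒳) :
    IsPMF (avoidingMechanism x₀ t x) :=
  isPMF_binaryMechanism (by split_ifs <;> simp [h0]) (by split_ifs <;> simp [h1])

lemma avoidingMechanism_self_true (x₀ : 𝒳) (t : ℝ) : avoidingMechanism x₀ t x₀ true = 0 := by
  simp [avoidingMechanism, binaryMechanism]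

variable [Fintype 𝒳]

lemma outMarginal_avoidingMechanism_true (x₀ : 𝒳) (t : ℝ) {q : 𝒳 → ℝ} (hq : ∑ x, q x = 1) :
    outMarginal (avoidingMechanism x₀ t) q true = t * (1 - q x₀) := by
  rw [avoidingMechanism, outMarginal_binaryMechanism_true]
  simp only [ite_mul, zero_mul, Finset.sum_ite, Finset.sum_const_zero, zero_add, ← Finset.mul_sum]
  rw [← hq, Finset.filter_ne', Finset.sum_erase_eq_sub (Finset.mem_univ _)]

lemma outMarginal_avoidingMechanism_false (x₀ : 𝒳) (t : ℝ) {q : 𝒳 → ℝ} (hq : ∑ x, q x = 1) :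
    outMarginal (avoidingMechanism x₀ t) q false = 1 - t * (1 - q x₀) := by
  rw [← outMarginal_avoidingMechanism_true x₀ t hq, avoidingMechanism,
    outMarginal_binaryMechanism_false _ hq, outMarginal_binaryMechanism_true]

variable [Nonempty 𝒳]

lemma pml_avoidingMechanism_true {x₀ x₁ : 𝒳} (hx₁ : x₁ ≠ x₀) {t : ℝ} (ht : 0 ≤ t)
    {q : 𝒳 → ℝ} (hq : ∑ x, q x = 1) :
    pml (avoidingMechanism x₀ t) q true = Real.log (t / (t * (1 - q x₀))) := by
  have hmax : maxVal (fun x => avoidingMechanism x₀ t x true) = t :=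
    maxVal_eq_of_forall_le
      (fun x => by by_cases hx : x = x₀ <;> simp [avoidingMechanism, binaryMechanism, hx, ht])
      x₁ (by simp [avoidingMechanism, binaryMechanism, hx₁])
  rw [pml, hmax, outMarginal_avoidingMechanism_true x₀ t hq]

lemma pml_avoidingMechanism_false (x₀ : 𝒳) {t : ℝ} (ht : 0 ≤ t) {q : 𝒳 → ℝ}
    (hq : ∑ x, q x = 1) :
    pml (avoidingMechanism x₀ t) q false = Real.log (1 / (1 - t * (1 - q x₀))) := by
  have hmax : maxVal (fun x => avoidingMechanism x₀ t x false) = 1 :=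
    maxVal_eq_of_forall_le
      (fun x => by by_cases hx : x = x₀ <;> simp [avoidingMechanism, binaryMechanism, hx, ht])
      x₀ (by simp [avoidingMechanism, binaryMechanism])
  rw [pml, hmax, outMarginal_avoidingMechanism_false x₀ t hq]

lemma satisfiesPML_avoidingMechanism {q : 𝒳 → ℝ} (hq : ∑ x, q x = 1) {x₀ x₁ : 𝒳}
    (hx₁ : x₁ ≠ x₀) (hpos : 0 < q x₀) (hlt : q x₀ < 1) :
    SatisfiesPML (avoidingMechanism x₀ (q x₀)) q (Real.log (1 / (1 - q x₀))) := by
  intro y _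
  cases y
  · rw [pml_avoidingMechanism_false x₀ hpos.le hq]
    refine Real.log_le_log (one_div_pos.mpr (by nlinarith))
      (one_div_le_one_div_of_le (by linarith) ?_)
    nlinarith
  · rw [pml_avoidingMechanism_true hx₁ hpos.le hq, div_mul_cancel_left₀ hpos.ne', one_div]

end BinaryMechanism

/-- **Smallest disclosure threshold, part (ii).** If `𝒳` has at least two elements and
`ε ≥ log (1/(1 − p_min))` with `p_min = min_x P_X(x)`, then there exist a finite nonempty
outcome set `𝒴`, a mechanism `P` satisfying `(ε, P_X)`-PML, a finite alphabet `𝒰`, and an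
attribute `U` of `X` such that the mechanism discloses the value of `U` to `P_X`. -/
theorem smallest_disclosure_threshold_attained
    {𝒳 : Type*} [Fintype 𝒳] [Nonempty 𝒳] (hcard : 1 < Fintype.card 𝒳)
    (PX : 𝒳 → ℝ) (hPX : IsPMF PX) (hfs : ∀ x, 0 < PX x)
    (ε : ℝ) (hε : Real.log (1 / (1 - minVal PX)) ≤ ε) :
    ∃ (𝒴 : Type) (iY : Fintype 𝒴) (nY : Nonempty 𝒴) (P : 𝒳 → 𝒴 → ℝ),
      (∀ x, @IsPMF 𝒴 iY (P x)) ∧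
      SatisfiesPML P PX ε ∧
      ∃ (𝒰 : Type) (iU : Fintype 𝒰) (nU : Nonempty 𝒰) (PU : 𝒳 → 𝒰 → ℝ),
        (∀ x, @IsPMF 𝒰 iU (PU x)) ∧
        @Discloses 𝒳 𝒴 𝒰 _ iU nU P PU PX := by
  classical
  obtain ⟨x₀, hx₀⟩ := exists_eq_minVal PX
  obtain ⟨x₁, hx₁⟩ := Fintype.exists_ne_of_one_lt_card hcard x₀
  have hlt : PX x₀ < 1 := hPX.lt_one hx₁.symm (hfs x₁)
  have hmarginal : 0 < outMarginal (avoidingMechanism x₀ (PX x₀)) PX true := by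
    rw [outMarginal_avoidingMechanism_true x₀ _ hPX.2]
    exact mul_pos (hfs x₀) (by linarith)
  refine ⟨Bool, inferInstance, inferInstance, avoidingMechanism x₀ (PX x₀),
    isPMF_avoidingMechanism x₀ (hfs x₀).le hlt.le,
    (satisfiesPML_avoidingMechanism hPX.2 hx₁ (hfs x₀) hlt).mono (hx₀ ▸ hε),
    Bool, inferInstance, inferInstance, detKernel fun x => decide (x = x₀),
    isPMF_detKernel _, discloses_detKernel _ (u₀ := false) hmarginal fun x hx => ?_⟩
  obtain rfl : x = x₀ := by simpa using hx
  exact avoidingMechanism_self_true x (PX x)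
end

section
/- No singling out below the data entropy: Let P_X be a full-support prior on 𝒳 and suppose the mechanism P_{Y|X} satisfies (ε, P_X)-PML with ε < H_∞(P_X). Then the mechanism does not single out the value of X: for every y with output marginal (P_X)_Y(y) > 0, H_∞(P_{X|Y=y}) > 0 (in fact H_∞(P_{X|Y=y}) ≥ H_∞(P_X) − ε). -/
open Finset

lemma le_maxVal {α : Type*} [Fintype α] [Nonempty α] (p : α → ℝ) (a : α) :
    p a ≤ maxVal p := by
  unfold maxVal; exact Finset.le_sup' _ (Finset.mem_univ a)

/-- **No singling out below the data entropy.** If the mechanism satisfies `(ε, P_X)`-PML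
with `ε < H_∞(P_X)`, then for every outcome `y` with positive marginal the posterior on
`𝒳` has positive min-entropy; in fact `H_∞(P_{X|Y=y}) ≥ H_∞(P_X) − ε`. -/
theorem no_singling_out_below_entropy
    {𝒳 𝒴 : Type*} [Fintype 𝒳] [Fintype 𝒴] [Nonempty 𝒳] [Nonempty 𝒴]
    (P : 𝒳 → 𝒴 → ℝ) (hP : ∀ x, IsPMF (P x))
    (PX : 𝒳 → ℝ) (hPX : IsPMF PX) (hfs : ∀ x, 0 < PX x)
    (ε : ℝ) (hε : ε < minEntropy PX)
    (hpml : SatisfiesPML P PX ε) :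
    ∀ y, 0 < outMarginal P PX y →
      0 < minEntropy (posteriorX P PX y) ∧
      minEntropy PX - ε ≤ minEntropy (posteriorX P PX y) := by
  intro y hy
  -- basic facts
  have hMle : ∀ x, P x y ≤ maxVal (fun x => P x y) := fun x =>
    le_maxVal (fun x => P x y) x
  -- some x0 with P x0 y * PX x0 > 0
  obtain ⟨x0, -, hx0⟩ : ∃ x ∈ Finset.univ, 0 < P x y * PX x := by
    by_contra h
    push_neg at h
    have : outMarginal P PX y ≤ 0 := Finset.sum_nonpos (fun x hx => h x hx)
    linarith
  have hPx0 : 0 < P x0 y := by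
    have := (hP x0).1 y
    nlinarith [hfs x0]
  have hM : 0 < maxVal (fun x => P x y) := lt_of_lt_of_le hPx0 (hMle x0)
  have hMq : 0 < maxVal (fun x => P x y) / outMarginal P PX y := div_pos hM hy
  have hlog : Real.log (maxVal (fun x => P x y) / outMarginal P PX y) ≤ ε := hpml y hy
  have hMle' : maxVal (fun x => P x y) ≤ Real.exp ε * outMarginal P PX y := by
    have := Real.log_le_iff_le_exp hMq |>.mp hlog
    rw [div_le_iff₀ hy] at this
    linarith
  -- maxVal of PX
  have hPXle : ∀ x, PX x ≤ maxVal PX := fun x => le_maxVal PX x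
  have hmaxPX : 0 < maxVal PX := lt_of_lt_of_le (hfs x0) (hPXle x0)
  -- bound on posterior
  have hpostle : ∀ x, posteriorX P PX y x ≤ Real.exp ε * maxVal PX := by
    intro x
    unfold posteriorX
    rw [div_le_iff₀ hy]
    have h1 : P x y ≤ Real.exp ε * outMarginal P PX y :=
      le_trans (hMle x) hMle'
    have h2 : PX x ≤ maxVal PX := hPXle x
    nlinarith [(hP x).1 y, (hfs x).le, Real.exp_pos ε, hy.le]
  have hpostmax : maxVal (posteriorX P PX y) ≤ Real.exp ε * maxVal PX := by
    unfold maxVal; exact Finset.sup'_le _ _ (fun x _ => hpostle x)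
  have hpost0 : 0 < maxVal (posteriorX P PX y) := by
    refine lt_of_lt_of_le ?_ (le_maxVal (posteriorX P PX y) x0)
    exact div_pos hx0 hy
  have key : minEntropy PX - ε ≤ minEntropy (posteriorX P PX y) := by
    unfold minEntropy
    have := Real.log_le_log hpost0 hpostmax
    rw [Real.log_mul (Real.exp_ne_zero ε) (ne_of_gt hmaxPX), Real.log_exp] at this
    linarith
  exact ⟨by linarith, key⟩
end

section
/- Differential privacy as a conditional-PML constraint under all full-support priors: For every ε ≥ 0, the mechanism p satisfies ε-differential privacy if and only if for every full-support prior q on 𝒟^n, every y ∈ 𝒴, every i ∈ [n], and every x ∈ 𝒟^n: p(x)(y) · Σ_{d''∈𝒟} q(x[i↦d'']) ≤ e^ε · Σ_{d'∈𝒟} p(x[i↦d'])(y) · q(x[i↦d']). (The displayed inequality is the conditional pointwise-maximal-leakage constraint ℓ(D_i → y | x_{−i}) ≤ ε, written in multiplied-out form.) -/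
open Finset

/-- A mechanism on databases: a conditional pmf from `𝒟^n` to `𝒴`. -/
def IsMechanism {𝒟 𝒴 : Type*} [Fintype 𝒴] {n : ℕ}
    (p : (Fin n → 𝒟) → 𝒴 → ℝ) : Prop :=
  ∀ x, (∀ y, 0 ≤ p x y) ∧ ∑ y, p x y = 1

/-- `ε`-differential privacy. -/
def DiffPrivate {𝒟 𝒴 : Type*} {n : ℕ} (p : (Fin n → 𝒟) → 𝒴 → ℝ) (ε : ℝ) : Prop :=
  ∀ (x : Fin n → 𝒟) (i : Fin n) (d' : 𝒟) (y : 𝒴),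
    p x y ≤ Real.exp ε * p (Function.update x i d') y

/-- `ε`-free-lunch privacy. -/
def FreeLunch {𝒟 𝒴 : Type*} {n : ℕ} (p : (Fin n → 𝒟) → 𝒴 → ℝ) (ε : ℝ) : Prop :=
  ∀ (x x' : Fin n → 𝒟) (y : 𝒴), p x y ≤ Real.exp ε * p x' y

/-!
The forward direction averages the differential-privacy inequality against the weights
`q (x[i ↦ d])`. For the converse, the constraint is invariant under rescaling `q`, so it can be
tested on the unnormalized weights `t + 𝟙[z = x[i ↦ d']]`; these turn it into an affine
inequality in `t > 0`, and letting `t → 0` leaves `p x y ≤ e^ε · p (x[i ↦ d']) y`.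
-/

open Function Filter Topology

lemma le_of_forall_pos_add_mul_le {a b c d : ℝ} (h : ∀ t > 0, a + b * t ≤ c + d * t) : a ≤ c := by
  have hlim : ∀ u v : ℝ, Tendsto (fun t => u + v * t) (𝓝[>] 0) (𝓝 u) := fun u v =>
    ((continuous_const.add (continuous_const.mul continuous_id)).tendsto' 0 u
      (by simp)).mono_left nhdsWithin_le_nhds
  exact le_of_tendsto_of_tendsto (hlim a b) (hlim c d) (eventually_nhdsWithin_of_forall h)

lemma isPMF_div_sum {α : Type*} [Fintype α] {w : α → ℝ} (hw : ∀ a, 0 < w a) [Nonempty α] :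
    IsPMF fun a => w a / ∑ b, w b := by
  have hS : 0 < ∑ b, w b := sum_pos (fun b _ => hw b) univ_nonempty
  exact ⟨fun a => div_nonneg (hw a).le hS.le, by rw [← sum_div, div_self hS.ne']⟩

section CondPML

variable {𝒟 𝒴 : Type*} [Fintype 𝒟] {n : ℕ}

/-- The conditional pointwise-maximal-leakage constraint `ℓ(D_i → y ∣ x_{−i}) ≤ ε` for the
prior `q`, with the conditional distributions multiplied out. -/
def CondPMLBound (p : (Fin n → 𝒟) → 𝒴 → ℝ) (ε : ℝ) (q : (Fin n → 𝒟) → ℝ) (y : 𝒴) (i : Fin n)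
    (x : Fin n → 𝒟) : Prop :=
  p x y * ∑ d, q (update x i d) ≤ Real.exp ε * ∑ d, p (update x i d) y * q (update x i d)

variable {p : (Fin n → 𝒟) → 𝒴 → ℝ} {ε : ℝ} {q : (Fin n → 𝒟) → ℝ} {y : 𝒴} {i : Fin n}
  {x : Fin n → 𝒟}

lemma DiffPrivate.condPMLBound (hdp : DiffPrivate p ε) (hq : ∀ z, 0 ≤ q z) :
    CondPMLBound p ε q y i x :=
  calc p x y * ∑ d, q (update x i d)
      = ∑ d, p x y * q (update x i d) := mul_sum _ _ _
    _ ≤ ∑ d, Real.exp ε * p (update x i d) y * q (update x i d) :=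
        sum_le_sum fun d _ => mul_le_mul_of_nonneg_right (hdp x i d y) (hq _)
    _ = Real.exp ε * ∑ d, p (update x i d) y * q (update x i d) := by
        simp only [mul_sum, mul_assoc]

lemma CondPMLBound.of_div_const {c : ℝ} (hc : 0 < c)
    (h : CondPMLBound p ε (fun z => q z / c) y i x) : CondPMLBound p ε q y i x := by
  simp only [CondPMLBound, ← mul_div_assoc, ← sum_div] at h
  exact (div_le_div_iff_of_pos_right hc).mp h

lemma sum_mul_add_ite_update_eq [DecidableEq 𝒟] (f : 𝒟 → ℝ) (t : ℝ) (d' : 𝒟) :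
    ∑ d, f d * (t + if update x i d = update x i d' then 1 else 0) = t * ∑ d, f d + f d' := by
  simp only [(update_injective x i).eq_iff, mul_add, mul_ite, mul_one, mul_zero,
    sum_add_distrib, sum_ite_eq', mem_univ, if_true, mul_sum, mul_comm]

lemma diffPrivate_of_forall_condPMLBound
    (h : ∀ q, IsPMF q → (∀ z, 0 < q z) → ∀ y i x, CondPMLBound p ε q y i x) :
    DiffPrivate p ε := by
  classical
  intro x i d' y
  have : Nonempty (Fin n → 𝒟) := ⟨x⟩
  refine le_of_forall_pos_add_mul_le (b := p x y * Fintype.card 𝒟)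
    (d := Real.exp ε * ∑ d, p (update x i d) y) fun t ht => ?_
  set w : (Fin n → 𝒟) → ℝ := fun z => t + if z = update x i d' then 1 else 0
  have hw : ∀ z, 0 < w z := fun z => by positivity
  have hS : 0 < ∑ z, w z := sum_pos (fun z _ => hw z) univ_nonempty
  have : CondPMLBound p ε w y i x :=
    .of_div_const hS (h _ (isPMF_div_sum hw) (fun z => div_pos (hw z) hS) y i x)
  have hsum := sum_mul_add_ite_update_eq (x := x) (i := i) (fun _ => (1 : ℝ)) t d'
  simp only [one_mul, sum_const, card_univ, nsmul_eq_mul, mul_one] at hsum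
  simp only [CondPMLBound, w, hsum, sum_mul_add_ite_update_eq] at this
  linarith

end CondPML

theorem dp_iff_conditional_pml_all_priors_general
    {𝒟 𝒴 : Type*} [Fintype 𝒟]
    {n : ℕ}
    (p : (Fin n → 𝒟) → 𝒴 → ℝ)
    (ε : ℝ) :
    DiffPrivate p ε ↔
      ∀ q : (Fin n → 𝒟) → ℝ, IsPMF q → (∀ x, 0 < q x) →
        ∀ (y : 𝒴) (i : Fin n) (x : Fin n → 𝒟),
          p x y * (∑ d'' : 𝒟, q (Function.update x i d'')) ≤
            Real.exp ε *
              ∑ d' : 𝒟, p (Function.update x i d') y * q (Function.update x i d') :=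
  ⟨fun hdp _ hq _ _ _ _ => hdp.condPMLBound hq.1, diffPrivate_of_forall_condPMLBound⟩

/-- **Differential privacy as a conditional-PML constraint under all full-support
priors.** The mechanism `p` satisfies `ε`-differential privacy iff for every
full-support prior `q`, every outcome `y`, every coordinate `i`, and every database `x`,
`p(x)(y) · Σ_{d''} q(x[i↦d'']) ≤ e^ε · Σ_{d'} p(x[i↦d'])(y) · q(x[i↦d'])`,
i.e. the conditional PML constraint `ℓ(D_i → y ∣ x_{−i}) ≤ ε` holds. -/
theorem dp_iff_conditional_pml_all_priors
    {𝒟 𝒴 : Type*} [Fintype 𝒟] [Fintype 𝒴] [Nonempty 𝒴]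
    (hD : 2 ≤ Fintype.card 𝒟) {n : ℕ} (hn : 1 ≤ n)
    (p : (Fin n → 𝒟) → 𝒴 → ℝ) (hp : IsMechanism p)
    (ε : ℝ) (hε : 0 ≤ ε) :
    DiffPrivate p ε ↔
      ∀ q : (Fin n → 𝒟) → ℝ, IsPMF q → (∀ x, 0 < q x) →
        ∀ (y : 𝒴) (i : Fin n) (x : Fin n → 𝒟),
          p x y * (∑ d'' : 𝒟, q (Function.update x i d'')) ≤
            Real.exp ε *
              ∑ d' : 𝒟, p (Function.update x i d') y * q (Function.update x i d') :=
  dp_iff_conditional_pml_all_priors_general p ε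
end

section
/- Differential privacy as a conditional-PML constraint under product priors: For every ε ≥ 0, the mechanism p satisfies ε-differential privacy if and only if for every full-support product prior q on 𝒟^n, every y ∈ 𝒴, every i ∈ [n], and every x ∈ 𝒟^n: p(x)(y) · Σ_{d''∈𝒟} q(x[i↦d'']) ≤ e^ε · Σ_{d'∈𝒟} p(x[i↦d'])(y) · q(x[i↦d']). (The displayed inequality is the conditional pointwise-maximal-leakage constraint ℓ(D_i → y | x_{−i}) ≤ ε, written in multiplied-out form.) -/
open Finset

/-!
Differential privacy bounds `p(x)(y)` by `e^ε p(x[i↦d])(y)` for each `d`, and averaging these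
bounds against any prior gives the conditional constraint. Conversely, under a product prior the
constraint at `(i, x)` only involves the marginal `qᵢ`, since the other factors are a common
positive constant. Choosing `qᵢ = (1 - δ) 𝟙_{d'} + δ · uniform` and letting `δ → 0⁺` recovers the
differential-privacy inequality for the neighbour `x[i↦d']`.
-/

open Filter Topology

section SmoothedDirac

variable {α : Type*} [Fintype α] [DecidableEq α]

noncomputable def smoothedDirac (a : α) (δ : ℝ) (d : α) : ℝ :=
  (1 - δ) * (if d = a then 1 else 0) + δ / Fintype.card α

theorem sum_mul_smoothedDirac (f : α → ℝ) (a : α) (δ : ℝ) :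
    ∑ d, f d * smoothedDirac a δ d = (1 - δ) * f a + δ / Fintype.card α * ∑ d, f d := by
  simp only [smoothedDirac, mul_add, sum_add_distrib, mul_ite, mul_one, mul_zero,
    sum_ite_eq', mem_univ, if_true, ← sum_mul]
  ring

theorem smoothedDirac_pos (a : α) {δ : ℝ} (hδ₀ : 0 < δ) (hδ₁ : δ ≤ 1) (d : α) :
    0 < smoothedDirac a δ d := by
  have hcard : (0 : ℝ) < Fintype.card α := Nat.cast_pos.mpr (Fintype.card_pos_iff.mpr ⟨a⟩)
  unfold smoothedDirac
  split_ifs <;> nlinarith [div_pos hδ₀ hcard]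

theorem isPMF_smoothedDirac (a : α) {δ : ℝ} (hδ₀ : 0 < δ) (hδ₁ : δ ≤ 1) :
    IsPMF (smoothedDirac a δ) := by
  refine ⟨fun d => (smoothedDirac_pos a hδ₀ hδ₁ d).le, ?_⟩
  have hcard : (Fintype.card α : ℝ) ≠ 0 := Nat.cast_ne_zero.mpr (Fintype.card_pos_iff.mpr ⟨a⟩).ne'
  have := sum_mul_smoothedDirac (fun _ => (1 : ℝ)) a δ
  simp only [one_mul, sum_const, card_univ, nsmul_eq_mul, mul_one] at this
  rw [this]
  field_simp
  ring

theorem tendsto_sum_mul_smoothedDirac (f : α → ℝ) (a : α) :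
    Tendsto (fun δ => ∑ d, f d * smoothedDirac a δ d) (𝓝 0) (𝓝 (f a)) := by
  simp only [sum_mul_smoothedDirac]
  have hcont : Continuous fun δ : ℝ => (1 - δ) * f a + δ / Fintype.card α * ∑ d, f d := by
    fun_prop
  simpa using hcont.tendsto 0

end SmoothedDirac

theorem prod_apply_update_eq_mul_prod_erase {ι α M : Type*} [Fintype ι] [DecidableEq ι]
    [CommMonoid M] (q : ι → α → M) (x : ι → α) (i : ι) (a : α) :
    ∏ j, q j (Function.update x i a j) = q i a * ∏ j ∈ univ.erase i, q j (x j) := by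
  simp only [Function.apply_update q, prod_update_of_mem (mem_univ i), sdiff_singleton_eq_erase]

theorem mul_sum_prod_update_le_iff {ι α : Type*} [Fintype ι] [DecidableEq ι] [Fintype α]
    (q : ι → α → ℝ) (x : ι → α) (i : ι) (hq : ∀ j ≠ i, 0 < q j (x j)) (a c : ℝ) (g : α → ℝ) :
    a * ∑ d, ∏ j, q j (Function.update x i d j) ≤
        c * ∑ d, g d * ∏ j, q j (Function.update x i d j) ↔
      a * ∑ d, q i d ≤ c * ∑ d, g d * q i d := by
  have hC : 0 < ∏ j ∈ univ.erase i, q j (x j) := prod_pos fun j hj => hq j (ne_of_mem_erase hj)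
  simp only [prod_apply_update_eq_mul_prod_erase, ← sum_mul, ← mul_assoc]
  exact mul_le_mul_iff_of_pos_right hC

theorem mul_sum_le_mul_sum_mul {α : Type*} [Fintype α] {a c : ℝ} {g w : α → ℝ}
    (hg : ∀ d, a ≤ c * g d) (hw : ∀ d, 0 ≤ w d) :
    a * ∑ d, w d ≤ c * ∑ d, g d * w d := by
  simp only [mul_sum, ← mul_assoc]
  exact sum_le_sum fun d _ => mul_le_mul_of_nonneg_right (hg d) (hw d)

theorem dp_iff_conditional_pml_product_priors_general
    {𝒟 𝒴 : Type*} [Fintype 𝒟] {n : ℕ}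
    (p : (Fin n → 𝒟) → 𝒴 → ℝ)
    (ε : ℝ) :
    DiffPrivate p ε ↔
      ∀ qi : Fin n → 𝒟 → ℝ, (∀ i, IsPMF (qi i)) → (∀ i d, 0 < qi i d) →
        ∀ (y : 𝒴) (i : Fin n) (x : Fin n → 𝒟),
          p x y * (∑ d'' : 𝒟, ∏ j, qi j (Function.update x i d'' j)) ≤
            Real.exp ε *
              ∑ d' : 𝒟, p (Function.update x i d') y *
                ∏ j, qi j (Function.update x i d' j) := by
  classical
  constructor
  · intro hdp qi _ hpos y i x
    exact mul_sum_le_mul_sum_mul (fun d => hdp x i d y) fun d => prod_nonneg fun j _ => (hpos j _).le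
  intro h x i d' y
  have hsmoothed : ∀ δ ∈ Set.Ioo (0 : ℝ) 1,
      p x y ≤ Real.exp ε * ∑ d, p (Function.update x i d) y * smoothedDirac d' δ d := by
    rintro δ ⟨hδ₀, hδ₁⟩
    have hprior := h (fun j => smoothedDirac (Function.update x i d' j) δ)
      (fun j => isPMF_smoothedDirac _ hδ₀ hδ₁.le) (fun j => smoothedDirac_pos _ hδ₀ hδ₁.le) y i x
    rw [mul_sum_prod_update_le_iff _ _ _ fun j _ => smoothedDirac_pos _ hδ₀ hδ₁.le _,
      Function.update_self, (isPMF_smoothedDirac d' hδ₀ hδ₁.le).2, mul_one] at hprior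
    exact hprior
  have hlim := ((tendsto_sum_mul_smoothedDirac (fun d => p (Function.update x i d) y) d').mono_left
    (nhdsWithin_le_nhds (s := Set.Ioi 0))).const_mul (Real.exp ε)
  exact ge_of_tendsto hlim (eventually_of_mem (Ioo_mem_nhdsGT one_pos) hsmoothed)

/-- **Differential privacy as a conditional-PML constraint under product priors.** The
mechanism `p` satisfies `ε`-differential privacy iff for every full-support product prior
`q(x) = Π_j q_j(x_j)`, every outcome `y`, every coordinate `i`, and every database `x`,
`p(x)(y) · Σ_{d''} q(x[i↦d'']) ≤ e^ε · Σ_{d'} p(x[i↦d'])(y) · q(x[i↦d'])`. -/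
theorem dp_iff_conditional_pml_product_priors
    {𝒟 𝒴 : Type*} [Fintype 𝒟] [Fintype 𝒴] [Nonempty 𝒴]
    (hD : 2 ≤ Fintype.card 𝒟) {n : ℕ} (hn : 1 ≤ n)
    (p : (Fin n → 𝒟) → 𝒴 → ℝ) (hp : IsMechanism p)
    (ε : ℝ) (hε : 0 ≤ ε) :
    DiffPrivate p ε ↔
      ∀ qi : Fin n → 𝒟 → ℝ, (∀ i, IsPMF (qi i)) → (∀ i d, 0 < qi i d) →
        ∀ (y : 𝒴) (i : Fin n) (x : Fin n → 𝒟),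
          p x y * (∑ d'' : 𝒟, ∏ j, qi j (Function.update x i d'' j)) ≤
            Real.exp ε *
              ∑ d' : 𝒟, p (Function.update x i d') y *
                ∏ j, qi j (Function.update x i d' j) :=
  dp_iff_conditional_pml_product_priors_general p ε
end

section
/- Differential privacy as an unconditional per-entry PML constraint under product priors: For every ε ≥ 0, the mechanism p satisfies ε-differential privacy if and only if for every full-support product prior q(x) = Π_{j=1}^n q_j(x_j) on 𝒟^n, every i ∈ [n], every d ∈ 𝒟, and every y ∈ 𝒴: Σ_{x∈𝒟^n : x_i = d} p(x)(y) · Π_{j≠i} q_j(x_j) ≤ e^ε · Σ_{x∈𝒟^n} p(x)(y) · q(x). (The left-hand side is the conditional output probability given D_i = d and the right-hand side is e^ε times the output marginal, so the displayed inequality is the per-entry pointwise-maximal-leakage constraint ℓ(D_i → y) ≤ ε.) -/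
/-!
Fix a coordinate `i` and an outcome `y`, and write `S d` for the conditional output probability
given `D_i = d`. Replacing the `i`-th entry is a bijection between the fibres `{x_i = d}` and
`{x_i = d'}` that leaves the weights `∏_{j ≠ i} q_j(x_j)` unchanged, so differential privacy gives
`S d ≤ e^ε S d'` for all `d, d'`; averaging over `d' ∼ q_i` yields `S d ≤ e^ε · P(Y = y)`.

Conversely, both sides of the PML inequality are polynomial in the prior, and every product pmf is
a limit of full-support ones (mix in a little of the uniform distribution), so the inequality
holds for all product pmfs. At the point mass at `x[i ↦ d']` it reads `p(x)(y) ≤ e^ε p(x[i ↦ d'])(y)`.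
-/

open Finset

open Filter Topology

section MixUniform

variable {α : Type*} [Fintype α]

noncomputable def mixUniform (δ : ℝ) (q : α → ℝ) (a : α) : ℝ :=
  (1 - δ) * q a + δ / Fintype.card α

@[simp]
theorem mixUniform_zero (q : α → ℝ) : mixUniform 0 q = q := by
  ext a
  simp [mixUniform]

theorem continuous_mixUniform (q : α → ℝ) : Continuous fun δ : ℝ => mixUniform δ q := by
  unfold mixUniform
  fun_prop

variable [Nonempty α] {q : α → ℝ} {δ : ℝ}

theorem IsPMF.mixUniform (hq : IsPMF q) (hδ₀ : 0 ≤ δ) (hδ₁ : δ ≤ 1) :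
    IsPMF (mixUniform δ q) := by
  refine ⟨fun a => add_nonneg (mul_nonneg (by linarith) (hq.1 a)) (by positivity), ?_⟩
  simp only [_root_.mixUniform, sum_add_distrib, ← mul_sum, hq.2, sum_const, card_univ,
    nsmul_eq_mul]
  field_simp
  ring

theorem mixUniform_pos (hq : ∀ a, 0 ≤ q a) (hδ₀ : 0 < δ) (hδ₁ : δ ≤ 1) (a : α) :
    0 < mixUniform δ q a :=
  add_pos_of_nonneg_of_pos (mul_nonneg (by linarith) (hq a)) (by positivity)

end MixUniform

section PointMass

variable {𝒟 : Type*} [DecidableEq 𝒟] {n : ℕ}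

def pointMass (t : Fin n → 𝒟) (j : Fin n) (a : 𝒟) : ℝ :=
  if a = t j then 1 else 0

theorem prod_pointMass (t x : Fin n → 𝒟) (s : Finset (Fin n)) :
    ∏ j ∈ s, pointMass t j (x j) = if ∀ j ∈ s, x j = t j then 1 else 0 := by
  simp only [pointMass]
  rw [prod_ite_zero, prod_const_one]
  congr 1

theorem isPMF_pointMass [Fintype 𝒟] (t : Fin n → 𝒟) (j : Fin n) : IsPMF (pointMass t j) :=
  ⟨fun a => by unfold pointMass; split_ifs <;> norm_num, by simp [pointMass]⟩

end PointMass

section PerEntryPML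

variable {𝒟 𝒴 : Type*} [Fintype 𝒟] {n : ℕ}
  (p : (Fin n → 𝒟) → 𝒴 → ℝ) (qi : Fin n → 𝒟 → ℝ)

/-- `P(Y = y)` when the database is drawn from the product prior `∏ j, qi j`. -/
def outputMarginal (y : 𝒴) : ℝ :=
  ∑ x : Fin n → 𝒟, p x y * ∏ j, qi j (x j)

theorem continuous_outputMarginal (y : 𝒴) :
    Continuous fun qi : Fin n → 𝒟 → ℝ => outputMarginal p qi y := by
  unfold outputMarginal
  fun_prop

variable [DecidableEq 𝒟]

theorem outputMarginal_pointMass (t : Fin n → 𝒟) (y : 𝒴) :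
    outputMarginal p (pointMass t) y = p t y := by
  simp [outputMarginal, prod_pointMass, ← funext_iff]

/-- `P(Y = y | D_i = d)` when the database is drawn from the product prior `∏ j, qi j`. -/
def condOutputProb (i : Fin n) (d : 𝒟) (y : 𝒴) : ℝ :=
  ∑ x ∈ univ.filter (fun x : Fin n → 𝒟 => x i = d), p x y * ∏ j ∈ univ.erase i, qi j (x j)

theorem continuous_condOutputProb (i : Fin n) (d : 𝒟) (y : 𝒴) :
    Continuous fun qi : Fin n → 𝒟 → ℝ => condOutputProb p qi i d y := by
  unfold condOutputProb
  fun_prop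

theorem condOutputProb_pointMass (t : Fin n → 𝒟) (i : Fin n) (d : 𝒟) (y : 𝒴) :
    condOutputProb p (pointMass t) i d y = p (Function.update t i d) y := by
  simp_rw [condOutputProb, prod_pointMass, mul_ite, mul_one, mul_zero, sum_filter, ← ite_and]
  simp [← Function.eq_update_iff]

theorem outputMarginal_eq_sum_mul_condOutputProb (i : Fin n) (y : 𝒴) :
    outputMarginal p qi y = ∑ d, qi i d * condOutputProb p qi i d y := by
  rw [outputMarginal, ← sum_fiberwise univ (fun x : Fin n → 𝒟 => x i)]
  refine sum_congr rfl fun d _ => ?_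
  rw [condOutputProb, mul_sum]
  refine sum_congr rfl fun x hx => ?_
  rw [(mem_filter.1 hx).2.symm, ← mul_prod_erase univ (fun j => qi j (x j)) (mem_univ i)]
  ring

theorem condOutputProb_eq_sum_update (i : Fin n) (d d' : 𝒟) (y : 𝒴) :
    condOutputProb p qi i d' y = ∑ x ∈ univ.filter (fun x : Fin n → 𝒟 => x i = d),
      p (Function.update x i d') y * ∏ j ∈ univ.erase i, qi j (x j) := by
  refine sum_nbij' (fun x => Function.update x i d) (fun x => Function.update x i d')
    (by simp) (by simp) ?_ ?_ ?_
  · intro x hx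
    rw [Function.update_idem, ← (mem_filter.1 hx).2, Function.update_eq_self]
  · intro x hx
    rw [Function.update_idem, ← (mem_filter.1 hx).2, Function.update_eq_self]
  · intro x hx
    rw [Function.update_idem, ← (mem_filter.1 hx).2, Function.update_eq_self]
    refine congrArg _ (prod_congr rfl fun j hj => ?_)
    rw [Function.update_of_ne (ne_of_mem_erase hj)]

def SatisfiesPerEntryPML (ε : ℝ) : Prop :=
  ∀ (i : Fin n) (d : 𝒟) (y : 𝒴), condOutputProb p qi i d y ≤ Real.exp ε * outputMarginal p qi y

variable {p qi} {ε : ℝ}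

theorem condOutputProb_le_of_diffPrivate (hp : DiffPrivate p ε) (hq : ∀ j a, 0 ≤ qi j a)
    (i : Fin n) (d d' : 𝒟) (y : 𝒴) :
    condOutputProb p qi i d y ≤ Real.exp ε * condOutputProb p qi i d' y := by
  rw [condOutputProb_eq_sum_update p qi i d d', mul_sum, condOutputProb]
  refine sum_le_sum fun x _ => ?_
  rw [← mul_assoc]
  exact mul_le_mul_of_nonneg_right (hp x i d' y) (prod_nonneg fun j _ => hq j (x j))

theorem satisfiesPerEntryPML_of_diffPrivate (hp : DiffPrivate p ε) (hq : ∀ i, IsPMF (qi i)) :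
    SatisfiesPerEntryPML p qi ε := by
  intro i d y
  calc condOutputProb p qi i d y = ∑ d', qi i d' * condOutputProb p qi i d y := by
        rw [← sum_mul, (hq i).2, one_mul]
    _ ≤ ∑ d', qi i d' * (Real.exp ε * condOutputProb p qi i d' y) :=
        sum_le_sum fun d' _ => mul_le_mul_of_nonneg_left
          (condOutputProb_le_of_diffPrivate hp (fun j => (hq j).1) i d d' y) ((hq i).1 d')
    _ = Real.exp ε * outputMarginal p qi y := by
        rw [outputMarginal_eq_sum_mul_condOutputProb p qi i, mul_sum]
        exact sum_congr rfl fun _ _ => by ring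

theorem satisfiesPerEntryPML_of_forall_pos
    (h : ∀ qi : Fin n → 𝒟 → ℝ, (∀ i, IsPMF (qi i)) → (∀ i d, 0 < qi i d) →
      SatisfiesPerEntryPML p qi ε)
    (hq : ∀ i, IsPMF (qi i)) : SatisfiesPerEntryPML p qi ε := by
  intro i d y
  have : Nonempty 𝒟 := ⟨d⟩
  have hmix : Tendsto (fun δ : ℝ => fun j => mixUniform δ (qi j)) (𝓝[>] 0) (𝓝 qi) := by
    refine tendsto_nhdsWithin_of_tendsto_nhds ?_
    simpa using (continuous_pi fun j => continuous_mixUniform (qi j)).tendsto 0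
  refine le_of_tendsto_of_tendsto
    (((continuous_condOutputProb p i d y).tendsto qi).comp hmix)
    (((continuous_outputMarginal p y).tendsto qi).const_mul _ |>.comp hmix) ?_
  filter_upwards [Ioo_mem_nhdsGT zero_lt_one] with δ hδ
  exact h _ (fun j => (hq j).mixUniform hδ.1.le hδ.2.le)
    (fun j => mixUniform_pos (hq j).1 hδ.1 hδ.2.le) i d y

theorem diffPrivate_of_satisfiesPerEntryPML_pointMass
    (h : ∀ t, SatisfiesPerEntryPML p (pointMass t) ε) : DiffPrivate p ε := by
  intro x i d' y
  simpa [condOutputProb_pointMass, outputMarginal_pointMass] using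
    h (Function.update x i d') i (x i) y

end PerEntryPML

theorem dp_iff_per_entry_pml_product_priors_general
    {𝒟 𝒴 : Type*} [Fintype 𝒟] [DecidableEq 𝒟]
    {n : ℕ}
    (p : (Fin n → 𝒟) → 𝒴 → ℝ)
    (ε : ℝ) :
    DiffPrivate p ε ↔
      ∀ qi : Fin n → 𝒟 → ℝ, (∀ i, IsPMF (qi i)) → (∀ i d, 0 < qi i d) →
        ∀ (i : Fin n) (d : 𝒟) (y : 𝒴),
          (∑ x ∈ Finset.univ.filter (fun x : Fin n → 𝒟 => x i = d),
              p x y * ∏ j ∈ Finset.univ.erase i, qi j (x j)) ≤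
            Real.exp ε * ∑ x : Fin n → 𝒟, p x y * ∏ j, qi j (x j) :=
  ⟨fun hp _ hq _ => satisfiesPerEntryPML_of_diffPrivate hp hq,
    fun h => diffPrivate_of_satisfiesPerEntryPML_pointMass fun t =>
      satisfiesPerEntryPML_of_forall_pos h (isPMF_pointMass t)⟩

/-- **Differential privacy as an unconditional per-entry PML constraint under product
priors.** The mechanism `p` satisfies `ε`-differential privacy iff for every full-support
product prior `q(x) = Π_j q_j(x_j)`, every coordinate `i`, every value `d`, and every
outcome `y`, the conditional output probability given `D_i = d` is at most `e^ε` times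
the output marginal: `Σ_{x : x_i = d} p(x)(y) · Π_{j≠i} q_j(x_j) ≤ e^ε · Σ_x p(x)(y) · q(x)`,
i.e. the per-entry PML constraint `ℓ(D_i → y) ≤ ε` holds. -/
theorem dp_iff_per_entry_pml_product_priors
    {𝒟 𝒴 : Type*} [Fintype 𝒟] [DecidableEq 𝒟] [Fintype 𝒴] [Nonempty 𝒴]
    (hD : 2 ≤ Fintype.card 𝒟) {n : ℕ} (hn : 1 ≤ n)
    (p : (Fin n → 𝒟) → 𝒴 → ℝ) (hp : IsMechanism p)
    (ε : ℝ) (hε : 0 ≤ ε) :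
    DiffPrivate p ε ↔
      ∀ qi : Fin n → 𝒟 → ℝ, (∀ i, IsPMF (qi i)) → (∀ i d, 0 < qi i d) →
        ∀ (i : Fin n) (d : 𝒟) (y : 𝒴),
          (∑ x ∈ Finset.univ.filter (fun x : Fin n → 𝒟 => x i = d),
              p x y * ∏ j ∈ Finset.univ.erase i, qi j (x j)) ≤
            Real.exp ε * ∑ x : Fin n → 𝒟, p x y * ∏ j, qi j (x j) :=
  dp_iff_per_entry_pml_product_priors_general p ε
end

section
/- Free-lunch privacy as a PML constraint under all full-support priors: For every ε ≥ 0, the mechanism p satisfies ε-free-lunch privacy if and only if for every full-support prior q on 𝒟^n, every x ∈ 𝒟^n, and every y ∈ 𝒴: p(x)(y) ≤ e^ε · Σ_{x'∈𝒟^n} p(x')(y) · q(x'). (The displayed inequality is the pointwise-maximal-leakage constraint ℓ(X → y) ≤ ε.) -/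
open Finset

/-!
Averaging the free-lunch bound `p x y ≤ e^ε p x' y` over `x'` against a prior gives the PML bound.
Conversely, the full-support priors `(1 - δ) 𝟙_{x'} + δ · uniform` tend to the point mass at `x'`
as `δ → 0`, and the PML bound for them passes to the limit `p x y ≤ e^ε p x' y`.
-/

open Filter Topology

section Priors

variable {α : Type*} [Fintype α]

theorem IsPMF.le_mul_sum_of_forall_le {q : α → ℝ} (hq : IsPMF q) {f : α → ℝ} {a c : ℝ}
    (h : ∀ z, a ≤ c * f z) : a ≤ c * ∑ z, f z * q z :=
  calc a = ∑ z, a * q z := by rw [← mul_sum, hq.2, mul_one]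
    _ ≤ ∑ z, c * f z * q z := sum_le_sum fun z _ => mul_le_mul_of_nonneg_right (h z) (hq.1 z)
    _ = c * ∑ z, f z * q z := by simp only [mul_sum, mul_assoc]

variable [DecidableEq α]

noncomputable def diracMixUniform (a : α) (δ : ℝ) (z : α) : ℝ :=
  (1 - δ) * (if z = a then 1 else 0) + δ / Fintype.card α

theorem sum_mul_diracMixUniform (f : α → ℝ) (a : α) (δ : ℝ) :
    ∑ z, f z * diracMixUniform a δ z = (1 - δ) * f a + δ / Fintype.card α * ∑ z, f z := by
  simp only [diracMixUniform, mul_add, sum_add_distrib, mul_ite, mul_one, mul_zero,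
    sum_ite_eq', mem_univ, if_true, ← sum_mul]
  ring

theorem diracMixUniform_pos (a z : α) {δ : ℝ} (hδ₀ : 0 < δ) (hδ₁ : δ ≤ 1) :
    0 < diracMixUniform a δ z := by
  have h_uniform : 0 < δ / Fintype.card α :=
    div_pos hδ₀ (by exact_mod_cast Fintype.card_pos_iff.2 ⟨a⟩)
  have h_dirac : 0 ≤ (1 - δ) * (if z = a then 1 else 0 : ℝ) :=
    mul_nonneg (by linarith) (by split_ifs <;> norm_num)
  exact add_pos_of_nonneg_of_pos h_dirac h_uniform

theorem isPMF_diracMixUniform (a : α) {δ : ℝ} (hδ₀ : 0 < δ) (hδ₁ : δ ≤ 1) :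
    IsPMF (diracMixUniform a δ) := by
  refine ⟨fun z => (diracMixUniform_pos a z hδ₀ hδ₁).le, ?_⟩
  have : Nonempty α := ⟨a⟩
  have hcard : (Fintype.card α : ℝ) ≠ 0 := by exact_mod_cast Fintype.card_ne_zero (α := α)
  simpa [div_mul_cancel₀ δ hcard] using sum_mul_diracMixUniform (fun _ => (1 : ℝ)) a δ

theorem tendsto_sum_mul_diracMixUniform (f : α → ℝ) (a : α) :
    Tendsto (fun δ => ∑ z, f z * diracMixUniform a δ z) (𝓝 0) (𝓝 (f a)) := by
  simp only [sum_mul_diracMixUniform]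
  have : Continuous fun δ : ℝ => (1 - δ) * f a + δ / Fintype.card α * ∑ z, f z := by fun_prop
  simpa using this.tendsto 0

theorem forall_le_mul_iff_forall_fullSupport (f : α → ℝ) (b c : ℝ) :
    (∀ z, b ≤ c * f z) ↔
      ∀ q : α → ℝ, IsPMF q → (∀ z, 0 < q z) → b ≤ c * ∑ z, f z * q z := by
  refine ⟨fun h q hq _ => hq.le_mul_sum_of_forall_le h, fun h z => ?_⟩
  have hlim := ((tendsto_sum_mul_diracMixUniform f z).const_mul c).mono_left
    (nhdsWithin_le_nhds (s := Set.Ioi 0))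
  refine ge_of_tendsto hlim (mem_of_superset (Ioo_mem_nhdsGT one_pos) fun δ hδ => ?_)
  exact h _ (isPMF_diracMixUniform z hδ.1 hδ.2.le) fun x => diracMixUniform_pos z x hδ.1 hδ.2.le

end Priors

theorem free_lunch_iff_pml_all_priors_general
    {𝒟 𝒴 : Type*} [Fintype 𝒟]
    {n : ℕ}
    (p : (Fin n → 𝒟) → 𝒴 → ℝ)
    (ε : ℝ) :
    FreeLunch p ε ↔
      ∀ q : (Fin n → 𝒟) → ℝ, IsPMF q → (∀ x, 0 < q x) →
        ∀ (x : Fin n → 𝒟) (y : 𝒴),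
          p x y ≤ Real.exp ε * ∑ x' : Fin n → 𝒟, p x' y * q x' := by
  classical
  constructor
  · intro h q hq hq_pos x y
    exact (forall_le_mul_iff_forall_fullSupport (p · y) _ _).1 (h x · y) q hq hq_pos
  · intro h x x' y
    exact (forall_le_mul_iff_forall_fullSupport (p · y) _ _).2
      (fun q hq hq_pos => h q hq hq_pos x y) x'

/-- **Free-lunch privacy as a PML constraint under all full-support priors.** The
mechanism `p` satisfies `ε`-free-lunch privacy iff for every full-support prior `q`,
every database `x`, and every outcome `y`,
`p(x)(y) ≤ e^ε · Σ_{x'} p(x')(y) · q(x')`, i.e. the PML constraint `ℓ(X → y) ≤ ε`. -/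
theorem free_lunch_iff_pml_all_priors
    {𝒟 𝒴 : Type*} [Fintype 𝒟] [Fintype 𝒴] [Nonempty 𝒴]
    (hD : 2 ≤ Fintype.card 𝒟) {n : ℕ} (hn : 1 ≤ n)
    (p : (Fin n → 𝒟) → 𝒴 → ℝ) (hp : IsMechanism p)
    (ε : ℝ) (hε : 0 ≤ ε) :
    FreeLunch p ε ↔
      ∀ q : (Fin n → 𝒟) → ℝ, IsPMF q → (∀ x, 0 < q x) →
        ∀ (x : Fin n → 𝒟) (y : 𝒴),
          p x y ≤ Real.exp ε * ∑ x' : Fin n → 𝒟, p x' y * q x' :=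
  free_lunch_iff_pml_all_priors_general p ε
end

section
/- Free-lunch privacy as a per-entry PML constraint under all full-support priors: For every ε ≥ 0, the mechanism p satisfies ε-free-lunch privacy if and only if for every full-support prior q on 𝒟^n, every i ∈ [n], every d ∈ 𝒟, and every y ∈ 𝒴: Σ_{x∈𝒟^n : x_i = d} p(x)(y) · q(x) ≤ e^ε · (Σ_{x∈𝒟^n : x_i = d} q(x)) · Σ_{x∈𝒟^n} p(x)(y) · q(x). (Dividing by the marginal probability Σ_{x : x_i = d} q(x) > 0, this is the per-entry pointwise-maximal-leakage constraint ℓ(D_i → y) ≤ ε.) -/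
open Finset

set_option maxHeartbeats 1600000 in
/-- **Free-lunch privacy as a per-entry PML constraint under all full-support priors.**
The mechanism `p` satisfies `ε`-free-lunch privacy iff for every full-support prior `q`,
every coordinate `i`, every value `d`, and every outcome `y`,
`Σ_{x : x_i = d} p(x)(y) · q(x) ≤ e^ε · (Σ_{x : x_i = d} q(x)) · Σ_x p(x)(y) · q(x)`,
which (dividing by the positive marginal `Σ_{x : x_i = d} q(x)`) is the per-entry PML
constraint `ℓ(D_i → y) ≤ ε`. -/
theorem free_lunch_iff_per_entry_pml_all_priors
    {𝒟 𝒴 : Type*} [Fintype 𝒟] [DecidableEq 𝒟] [Fintype 𝒴] [Nonempty 𝒴]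
    (hD : 2 ≤ Fintype.card 𝒟) {n : ℕ} (hn : 1 ≤ n)
    (p : (Fin n → 𝒟) → 𝒴 → ℝ) (hp : IsMechanism p)
    (ε : ℝ) (hε : 0 ≤ ε) :
    FreeLunch p ε ↔
      ∀ q : (Fin n → 𝒟) → ℝ, IsPMF q → (∀ x, 0 < q x) →
        ∀ (i : Fin n) (d : 𝒟) (y : 𝒴),
          (∑ x ∈ Finset.univ.filter (fun x : Fin n → 𝒟 => x i = d), p x y * q x) ≤
            Real.exp ε * (∑ x ∈ Finset.univ.filter (fun x : Fin n → 𝒟 => x i = d), q x) *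
              ∑ x : Fin n → 𝒟, p x y * q x := by
  have hp1 : ∀ x y, p x y ≤ 1 := by
    intro x y
    have h := Finset.single_le_sum (f := fun z => p x z) (fun z _ => (hp x).1 z)
      (Finset.mem_univ y)
    rw [(hp x).2] at h
    exact h
  have hexp : (0:ℝ) < Real.exp ε := Real.exp_pos ε
  constructor
  · intro hfl q hq _ i d y
    set F := Finset.univ.filter (fun x : Fin n → 𝒟 => x i = d) with hF
    set c : ℝ := ∑ x ∈ F, q x with hc
    have hkey : ∀ x' : Fin n → 𝒟,
        (∑ x ∈ F, p x y * q x) ≤ (Real.exp ε * p x' y) * c := by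
      intro x'
      calc ∑ x ∈ F, p x y * q x ≤ ∑ x ∈ F, (Real.exp ε * p x' y) * q x :=
            Finset.sum_le_sum fun x _ =>
              mul_le_mul_of_nonneg_right (hfl x x' y) (hq.1 x)
        _ = (Real.exp ε * p x' y) * c := by rw [hc, Finset.mul_sum]
    calc (∑ x ∈ F, p x y * q x)
        = (∑ x ∈ F, p x y * q x) * ∑ x' : Fin n → 𝒟, q x' := by rw [hq.2, mul_one]
      _ = ∑ x' : Fin n → 𝒟, (∑ x ∈ F, p x y * q x) * q x' := by rw [Finset.mul_sum]
      _ ≤ ∑ x' : Fin n → 𝒟, ((Real.exp ε * p x' y) * c) * q x' :=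
          Finset.sum_le_sum fun x' _ => mul_le_mul_of_nonneg_right (hkey x') (hq.1 x')
      _ = Real.exp ε * c * ∑ x' : Fin n → 𝒟, p x' y * q x' := by
          rw [Finset.mul_sum]
          exact Finset.sum_congr rfl fun x _ => by ring
  · intro h a b y
    by_cases hab : a = b
    · subst hab
      nlinarith [Real.one_le_exp hε, (hp a).1 y]
    obtain ⟨i, hi⟩ := Function.ne_iff.mp hab
    have hDne : Nonempty 𝒟 := Fintype.card_pos_iff.mp (by omega)
    set N : ℝ := (Fintype.card (Fin n → 𝒟) : ℝ) with hNdef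
    have hN1 : (1:ℝ) ≤ N := by
      have h0 : 1 ≤ Fintype.card (Fin n → 𝒟) := Fintype.card_pos
      rw [hNdef]
      exact_mod_cast h0
    refine le_of_forall_pos_le_add fun δ hδ => ?_
    have hC : 0 < Real.exp ε * (N * (N + 2)) := by positivity
    set t : ℝ := min (1 / (2 * N)) (δ / (Real.exp ε * (N * (N + 2)))) with htdef
    have ht0 : 0 < t := lt_min (by positivity) (div_pos hδ hC)
    have htN : N * t ≤ 1 / 2 := by
      have h1 : t ≤ 1 / (2 * N) := min_le_left _ _
      have h2 : N * t ≤ N * (1 / (2 * N)) := mul_le_mul_of_nonneg_left h1 (by linarith)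
      have h3 : N * (1 / (2 * N)) = 1 / 2 := by
        field_simp
      linarith
    have htδ : Real.exp ε * (N * (N + 2)) * t ≤ δ := by
      have := (le_div_iff₀ hC).mp (min_le_right (1 / (2 * N))
        (δ / (Real.exp ε * (N * (N + 2)))))
      linarith
    have ht1 : t ≤ 1 := by nlinarith
    set S : ℝ := ∑ x : Fin n → 𝒟, (if x = a then t else t ^ 2) with hSdef
    have hS0 : 0 ≤ S := by
      apply Finset.sum_nonneg
      intro x _
      split_ifs <;> positivity
    have hSle : S ≤ N * t := by
      have hb : ∀ x ∈ Finset.univ, (if x = a then t else t ^ 2) ≤ t := by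
        intro x _
        split_ifs
        · exact le_rfl
        · nlinarith
      calc S ≤ ∑ _x : Fin n → 𝒟, t := Finset.sum_le_sum hb
        _ = N * t := by rw [Finset.sum_const, nsmul_eq_mul, Finset.card_univ]
    set q : (Fin n → 𝒟) → ℝ :=
      fun x => (if x = a then t else t ^ 2) + (if x = b then 1 - S else 0) with hqdef
    have hba : ¬ (b = a) := fun hh => hab hh.symm
    have hqb : q b = t ^ 2 + (1 - S) := by simp [hqdef, hba]
    have hqa : q a = t := by simp [hqdef, hab]
    have hq0 : ∀ x, 0 < q x := by
      intro x
      by_cases hxb : x = b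
      · rw [hxb, hqb]
        nlinarith
      · simp only [hqdef, if_neg hxb, add_zero]
        split_ifs <;> positivity
    have hqsum : ∑ x : Fin n → 𝒟, q x = 1 := by
      simp only [hqdef]
      rw [Finset.sum_add_distrib, Finset.sum_ite_eq' Finset.univ b (fun _ => 1 - S)]
      simp only [Finset.mem_univ, if_true]
      rw [← hSdef]
      ring
    have hmain := h q ⟨fun x => (hq0 x).le, hqsum⟩ hq0 i (a i) y
    set F := Finset.univ.filter (fun x : Fin n → 𝒟 => x i = a i) with hF
    have haF : a ∈ F := by simp [hF]
    have hFb : ∀ x ∈ F, x ≠ b := by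
      intro x hx hxb
      subst hxb
      rw [hF, Finset.mem_filter] at hx
      exact hi hx.2.symm
    have hm : ∑ x ∈ F, q x ≤ t + N * t ^ 2 := by
      have hqF : ∀ x ∈ F, q x = (if x = a then t else t ^ 2) := by
        intro x hx
        simp only [hqdef, if_neg (hFb x hx), add_zero]
      rw [Finset.sum_congr rfl hqF, ← Finset.add_sum_erase _ _ haF, if_pos rfl]
      have hcard : ((F.erase a).card : ℝ) ≤ N := by
        rw [hNdef]
        exact_mod_cast Finset.card_le_univ (F.erase a)
      have herase : ∑ x ∈ F.erase a, (if x = a then t else t ^ 2) ≤ N * t ^ 2 := by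
        calc ∑ x ∈ F.erase a, (if x = a then t else t ^ 2)
            ≤ ∑ _x ∈ F.erase a, t ^ 2 := by
              apply Finset.sum_le_sum
              intro x hx
              rw [if_neg (Finset.ne_of_mem_erase hx)]
          _ = ((F.erase a).card : ℝ) * t ^ 2 := by rw [Finset.sum_const, nsmul_eq_mul]
          _ ≤ N * t ^ 2 := by nlinarith [sq_nonneg t]
      linarith
    have hT : ∑ x : Fin n → 𝒟, p x y * q x ≤ p b y + S := by
      have hsplit : ∀ x : Fin n → 𝒟, p x y * q x =
          p x y * (if x = a then t else t ^ 2) + (if x = b then p x y * (1 - S) else 0) := by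
        intro x
        by_cases hxb : x = b
        · subst hxb
          simp [hqdef, hba]
          ring
        · simp only [hqdef, if_neg hxb, add_zero]
      rw [Finset.sum_congr rfl fun x _ => hsplit x, Finset.sum_add_distrib,
        Finset.sum_ite_eq' Finset.univ b (fun x => p x y * (1 - S))]
      simp only [Finset.mem_univ, if_true]
      have h1 : ∑ x : Fin n → 𝒟, p x y * (if x = a then t else t ^ 2) ≤ S := by
        rw [hSdef]
        apply Finset.sum_le_sum
        intro x _
        have hb0 : 0 ≤ (if x = a then t else t ^ 2) := by split_ifs <;> positivity
        exact mul_le_of_le_one_left hb0 (hp1 x y)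
      have h2 : p b y * (1 - S) ≤ p b y := by nlinarith [(hp b).1 y]
      linarith
    have hT0 : 0 ≤ ∑ x : Fin n → 𝒟, p x y * q x :=
      Finset.sum_nonneg fun x _ => mul_nonneg ((hp x).1 y) (hq0 x).le
    have hlow : p a y * t ≤ ∑ x ∈ F, p x y * q x := by
      have h0 := Finset.single_le_sum (f := fun x => p x y * q x)
        (fun x _ => mul_nonneg ((hp x).1 y) (hq0 x).le) haF
      simpa only [hqa] using h0
    have key : p a y * t ≤ Real.exp ε * (t + N * t ^ 2) * (p b y + N * t) := by
      have hT' : ∑ x : Fin n → 𝒟, p x y * q x ≤ p b y + N * t := by linarith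
      have h1 : Real.exp ε * (∑ x ∈ F, q x) ≤ Real.exp ε * (t + N * t ^ 2) :=
        mul_le_mul_of_nonneg_left hm hexp.le
      have h2 : Real.exp ε * (∑ x ∈ F, q x) * (∑ x : Fin n → 𝒟, p x y * q x)
          ≤ Real.exp ε * (t + N * t ^ 2) * (p b y + N * t) :=
        mul_le_mul h1 hT' hT0 (by positivity)
      linarith
    have key' : p a y * t ≤ (Real.exp ε * (1 + N * t) * (p b y + N * t)) * t := by
      calc p a y * t ≤ Real.exp ε * (t + N * t ^ 2) * (p b y + N * t) := key
        _ = (Real.exp ε * (1 + N * t) * (p b y + N * t)) * t := by ring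
    have h1 : p a y ≤ Real.exp ε * (1 + N * t) * (p b y + N * t) :=
      le_of_mul_le_mul_right key' ht0
    have hpb1 := hp1 b y
    have hpb0 := (hp b).1 y
    have hu0 : (0:ℝ) ≤ N * t := by nlinarith
    have h2 : N * t * p b y ≤ N * t := by nlinarith
    have h3 : (N * t) * (N * t) ≤ N * t := by nlinarith
    have hx : 0 ≤ p b y + 3 * (N * t) - (1 + N * t) * (p b y + N * t) := by nlinarith
    have h4 : Real.exp ε * (1 + N * t) * (p b y + N * t)
        ≤ Real.exp ε * (p b y + 3 * (N * t)) := by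
      nlinarith [mul_nonneg hexp.le hx]
    have h5 : Real.exp ε * (3 * (N * t)) ≤ Real.exp ε * (N * (N + 2)) * t := by
      nlinarith [mul_nonneg (mul_nonneg hexp.le hu0) (by linarith : (0:ℝ) ≤ N - 1)]
    have e1 : Real.exp ε * (p b y + 3 * (N * t))
        = Real.exp ε * p b y + Real.exp ε * (3 * (N * t)) := by ring
    linarith
end

section
/- PML bound for the Laplace mechanism answering a counting query: Let 0 ≤ c < 1/2 and suppose μ is a pmf on 𝒟 with μ({d : f(d)=1}) = p for some p ∈ (c, 1−c). Then for every i ∈ [n] and every y ∈ ℝ: ℓ(D_i → y) ≤ 1/(n·b) − log( (1−c) + c·exp(1/(n·b)) ). -/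
open Finset

/-- Density of the Laplace mechanism answering the counting query associated with the
predicate `f`: `ρ(y|x) = (1/(2b)) exp(−|y − (f(x_1)+⋯+f(x_n))/n| / b)`. -/
noncomputable def lapRho {𝒟 : Type*} {n : ℕ} (f : 𝒟 → Bool) (b : ℝ)
    (y : ℝ) (x : Fin n → 𝒟) : ℝ :=
  (1 / (2 * b)) * Real.exp (-(|y - (∑ j, (if f (x j) then (1 : ℝ) else 0)) / (n : ℝ)| / b))

/-- Conditional output density of the Laplace mechanism given `D_i = d`, for an i.i.d.
database with common pmf `μ`: the expectation of `ρ(y|X)` over the remaining entries. -/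
noncomputable def lapCond {𝒟 : Type*} [Fintype 𝒟] [DecidableEq 𝒟] {n : ℕ}
    (f : 𝒟 → Bool) (b : ℝ) (μ : 𝒟 → ℝ) (i : Fin n) (y : ℝ) (d : 𝒟) : ℝ :=
  ∑ x ∈ Finset.univ.filter (fun x : Fin n → 𝒟 => x i = d),
    lapRho f b y x * ∏ j ∈ Finset.univ.erase i, μ (x j)

/-- Output marginal density of the Laplace mechanism for an i.i.d. database with
common pmf `μ`. -/
noncomputable def lapMarg {𝒟 : Type*} [Fintype 𝒟] (n : ℕ)
    (f : 𝒟 → Bool) (b : ℝ) (μ : 𝒟 → ℝ) (y : ℝ) : ℝ :=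
  ∑ x : Fin n → 𝒟, lapRho f b y x * ∏ j, μ (x j)

section Aux

variable {𝒟 : Type*} [Fintype 𝒟] [DecidableEq 𝒟] {n : ℕ}

lemma lapRho_pos (f : 𝒟 → Bool) {b : ℝ} (hb : 0 < b) (y : ℝ) (x : Fin n → 𝒟) :
    0 < lapRho f b y x := by
  unfold lapRho; positivity

lemma lapRho_congr (f : 𝒟 → Bool) (b y : ℝ) {x x' : Fin n → 𝒟}
    (h : ∀ j, f (x j) = f (x' j)) : lapRho f b y x = lapRho f b y x' := by
  unfold lapRho
  rw [show (∑ j, if f (x j) then (1 : ℝ) else 0) = ∑ j, if f (x' j) then (1 : ℝ) else 0 from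
    Finset.sum_congr rfl fun j _ => by rw [h j]]

lemma lapRho_ratio (f : 𝒟 → Bool) {b : ℝ} (hb : 0 < b) (hn : 1 ≤ n) (y : ℝ) (i : Fin n)
    (x x' : Fin n → 𝒟) (h : ∀ j, j ≠ i → x j = x' j) :
    lapRho f b y x ≤ Real.exp (1 / ((n : ℝ) * b)) * lapRho f b y x' := by
  have hn0 : (0 : ℝ) < n := by exact_mod_cast hn
  have hsum : ∀ z : Fin n → 𝒟, (∑ j, if f (z j) then (1 : ℝ) else 0)
      = (if f (z i) then (1 : ℝ) else 0) + ∑ j ∈ univ.erase i, (if f (z j) then (1 : ℝ) else 0) :=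
    fun z => (Finset.add_sum_erase _ _ (mem_univ i)).symm
  have hT : (∑ j ∈ univ.erase i, if f (x j) then (1 : ℝ) else 0)
      = ∑ j ∈ univ.erase i, if f (x' j) then (1 : ℝ) else 0 :=
    Finset.sum_congr rfl fun j hj => by rw [h j (Finset.ne_of_mem_erase hj)]
  have h1 : |(if f (x i) then (1 : ℝ) else 0) - (if f (x' i) then (1 : ℝ) else 0)| ≤ 1 := by
    cases hfi : f (x i) <;> cases hfi' : f (x' i) <;> simp
  have hdiff : |(∑ j, if f (x j) then (1 : ℝ) else 0)
      - (∑ j, if f (x' j) then (1 : ℝ) else 0)| ≤ 1 := by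
    rw [hsum x, hsum x', hT, add_sub_add_right_eq_sub]
    exact h1
  set S : ℝ := ∑ j, (if f (x j) then (1 : ℝ) else 0) with hS
  set S' : ℝ := ∑ j, (if f (x' j) then (1 : ℝ) else 0) with hS'
  have habs : |y - S' / n| ≤ |y - S / n| + 1 / n := by
    have htri : |y - S' / n| ≤ |y - S / n| + |S / n - S' / n| := by
      calc |y - S' / n| = |(y - S / n) + (S / n - S' / n)| := by ring_nf
        _ ≤ |y - S / n| + |S / n - S' / n| := abs_add_le _ _
    have h2 : |S / n - S' / n| ≤ 1 / n := by
      rw [div_sub_div_same, abs_div, abs_of_pos hn0]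
      exact div_le_div_of_nonneg_right hdiff hn0.le
    linarith
  have hkey : -(|y - S / n| / b) ≤ 1 / ((n : ℝ) * b) + -(|y - S' / n| / b) := by
    have h7 : -|y - S / (n : ℝ)| ≤ 1 / (n : ℝ) + -|y - S' / (n : ℝ)| := by linarith
    have h8 : (-|y - S / (n : ℝ)|) / b ≤ (1 / (n : ℝ) + -|y - S' / (n : ℝ)|) / b :=
      div_le_div_of_nonneg_right h7 hb.le
    calc -(|y - S / (n : ℝ)| / b) = (-|y - S / (n : ℝ)|) / b := by rw [neg_div]
      _ ≤ (1 / (n : ℝ) + -|y - S' / (n : ℝ)|) / b := h8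
      _ = 1 / ((n : ℝ) * b) + -(|y - S' / (n : ℝ)| / b) := by
          rw [add_div, div_div, neg_div]
  unfold lapRho
  rw [← hS, ← hS']
  have h2b : (0 : ℝ) < 1 / (2 * b) := by positivity
  calc 1 / (2 * b) * Real.exp (-(|y - S / n| / b))
      ≤ 1 / (2 * b) * Real.exp (1 / ((n : ℝ) * b) + -(|y - S' / n| / b)) := by
        exact mul_le_mul_of_nonneg_left (Real.exp_le_exp.mpr hkey) h2b.le
    _ = Real.exp (1 / ((n : ℝ) * b)) * (1 / (2 * b) * Real.exp (-(|y - S' / n| / b))) := by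
        rw [Real.exp_add]; ring

lemma lapCond_reindex (f : 𝒟 → Bool) (b : ℝ) (μ : 𝒟 → ℝ) (i : Fin n) (y : ℝ) (d d' : 𝒟) :
    lapCond f b μ i y d = ∑ x ∈ Finset.univ.filter (fun x : Fin n → 𝒟 => x i = d'),
      lapRho f b y (Function.update x i d) * ∏ j ∈ Finset.univ.erase i, μ (x j) := by
  unfold lapCond
  refine Finset.sum_nbij' (fun x => Function.update x i d') (fun x => Function.update x i d)
    ?_ ?_ ?_ ?_ ?_
  · intro x hx
    simp [Function.update_self]
  · intro x hx
    simp [Function.update_self]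
  · intro x hx
    have hx' : x i = d := (Finset.mem_filter.mp hx).2
    show Function.update (Function.update x i d') i d = x
    rw [Function.update_idem, ← hx', Function.update_eq_self]
  · intro x hx
    have hx' : x i = d' := (Finset.mem_filter.mp hx).2
    show Function.update (Function.update x i d) i d' = x
    rw [Function.update_idem, ← hx', Function.update_eq_self]
  · intro x hx
    have hx' : x i = d := (Finset.mem_filter.mp hx).2
    show lapRho f b y x * _ = lapRho f b y (Function.update (Function.update x i d') i d) *
      ∏ j ∈ Finset.univ.erase i, μ (Function.update x i d' j)
    rw [Function.update_idem, ← hx', Function.update_eq_self]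
    congr 1
    exact Finset.prod_congr rfl fun j hj =>
      by rw [Function.update_of_ne (Finset.ne_of_mem_erase hj)]

lemma lapCond_le (f : 𝒟 → Bool) {b : ℝ} (hb : 0 < b) (hn : 1 ≤ n) (μ : 𝒟 → ℝ)
    (hμ0 : ∀ d, 0 ≤ μ d) (i : Fin n) (y : ℝ) (d d' : 𝒟) :
    lapCond f b μ i y d ≤ Real.exp (1 / ((n : ℝ) * b)) * lapCond f b μ i y d' := by
  rw [lapCond_reindex f b μ i y d d']
  unfold lapCond
  rw [Finset.mul_sum]
  refine Finset.sum_le_sum fun x hx => ?_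
  have hprod : 0 ≤ ∏ j ∈ univ.erase i, μ (x j) :=
    Finset.prod_nonneg fun j _ => hμ0 _
  have hratio := lapRho_ratio f hb hn y i (Function.update x i d) x
    (fun j hj => Function.update_of_ne hj d x)
  calc lapRho f b y (Function.update x i d) * ∏ j ∈ univ.erase i, μ (x j)
      ≤ (Real.exp (1 / ((n : ℝ) * b)) * lapRho f b y x) * ∏ j ∈ univ.erase i, μ (x j) :=
        mul_le_mul_of_nonneg_right hratio hprod
    _ = Real.exp (1 / ((n : ℝ) * b)) * (lapRho f b y x * ∏ j ∈ univ.erase i, μ (x j)) := by ring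

lemma lapCond_congr (f : 𝒟 → Bool) (b : ℝ) (μ : 𝒟 → ℝ) (i : Fin n) (y : ℝ) {d d' : 𝒟}
    (hfd : f d = f d') : lapCond f b μ i y d = lapCond f b μ i y d' := by
  rw [lapCond_reindex f b μ i y d d']
  unfold lapCond
  refine Finset.sum_congr rfl fun x hx => ?_
  have hx' : x i = d' := (Finset.mem_filter.mp hx).2
  congr 1
  refine lapRho_congr f b y fun j => ?_
  rcases eq_or_ne j i with rfl | hj
  · rw [Function.update_self, hx', hfd]
  · rw [Function.update_of_ne hj]

lemma lapCond_pos (f : 𝒟 → Bool) {b : ℝ} (hb : 0 < b) (μ : 𝒟 → ℝ)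
    (hμ0 : ∀ d, 0 ≤ μ d) (hμ1 : ∑ d, μ d = 1) (i : Fin n) (y : ℝ) (d : 𝒟) :
    0 < lapCond f b μ i y d := by
  have hex : ∃ d₀, 0 < μ d₀ := by
    by_contra h
    push_neg at h
    have : ∑ d, μ d ≤ 0 := Finset.sum_nonpos fun d _ => h d
    linarith
  obtain ⟨d₀, hd₀⟩ := hex
  refine Finset.sum_pos' (fun x _ => mul_nonneg (lapRho_pos f hb y x).le
    (Finset.prod_nonneg fun j _ => hμ0 _)) ?_
  refine ⟨Function.update (fun _ => d₀) i d, ?_, ?_⟩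
  · simp [Function.update_self]
  · refine mul_pos (lapRho_pos f hb y _) (Finset.prod_pos fun j hj => ?_)
    rw [Function.update_of_ne (Finset.ne_of_mem_erase hj)]
    exact hd₀

lemma lapMarg_decomp (f : 𝒟 → Bool) (b : ℝ) (μ : 𝒟 → ℝ) (i : Fin n) (y : ℝ) :
    lapMarg n f b μ y = ∑ d, μ d * lapCond f b μ i y d := by
  unfold lapMarg lapCond
  rw [← Finset.sum_fiberwise univ (fun x : Fin n → 𝒟 => x i)
    (fun x => lapRho f b y x * ∏ j, μ (x j))]
  refine Finset.sum_congr rfl fun d _ => ?_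
  rw [Finset.mul_sum]
  refine Finset.sum_congr rfl fun x hx => ?_
  have hx' : x i = d := (Finset.mem_filter.mp hx).2
  rw [← Finset.mul_prod_erase univ (fun j => μ (x j)) (mem_univ i), hx']
  ring

end Aux

/-- **PML bound for the Laplace mechanism answering a counting query.** Let
`0 ≤ c < 1/2` and let `μ` be a pmf on `𝒟` with `μ({d : f(d) = 1}) = p` for some
`p ∈ (c, 1−c)`. Then for every `i ∈ [n]` and every outcome `y ∈ ℝ`,
`ℓ(D_i → y) = log (max_d ρ_i(y|d) / ρ_Y(y)) ≤ 1/(nb) − log((1−c) + c e^{1/(nb)})`. -/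
theorem laplace_counting_pml_bound
    {𝒟 : Type*} [Fintype 𝒟] [Nonempty 𝒟] [DecidableEq 𝒟]
    (f : 𝒟 → Bool) (n : ℕ) (hn : 1 ≤ n) (b : ℝ) (hb : 0 < b)
    (c : ℝ) (hc0 : 0 ≤ c) (hc : c < 1 / 2)
    (p : ℝ) (hpc : c < p) (hpc' : p < 1 - c)
    (μ : 𝒟 → ℝ) (hμ : IsPMF μ)
    (hμp : ∑ d ∈ Finset.univ.filter (fun d => f d = true), μ d = p)
    (i : Fin n) (y : ℝ) :
    Real.log
        ((Finset.univ.sup' Finset.univ_nonempty (lapCond f b μ i y)) /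
          lapMarg n f b μ y) ≤
      1 / ((n : ℝ) * b) - Real.log ((1 - c) + c * Real.exp (1 / ((n : ℝ) * b))) := by
  obtain ⟨hμ0, hμ1⟩ := hμ
  have hn0 : (0 : ℝ) < n := by exact_mod_cast hn
  set r : ℝ := Real.exp (1 / ((n : ℝ) * b)) with hrdef
  have hr0 : 0 < r := Real.exp_pos _
  have hr1 : 1 ≤ r := Real.one_le_exp (by positivity)
  obtain ⟨dstar, _, hMdef⟩ := Finset.exists_mem_eq_sup' Finset.univ_nonempty (lapCond f b μ i y)
  set M : ℝ := lapCond f b μ i y dstar with hMd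
  have hM : 0 < M := lapCond_pos f hb μ hμ0 hμ1 i y dstar
  -- mass of the fiber of dstar
  set q : ℝ := ∑ d ∈ Finset.univ.filter (fun d => f d = f dstar), μ d with hqdef
  have hsplitμ := Finset.sum_filter_add_sum_filter_not (univ : Finset 𝒟)
    (fun d => f d = true) μ
  rw [hμ1, hμp] at hsplitμ
  have hq : c < q := by
    rcases Bool.eq_false_or_eq_true (f dstar) with hfd | hfd
    · have hqp : q = p := by
        rw [hqdef, ← hμp]
        refine Finset.sum_congr ?_ fun _ _ => rfl
        apply Finset.filter_congr
        intro d _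
        simp [hfd]
      linarith [hqp]
    · have hqp : q = ∑ d ∈ Finset.univ.filter (fun d => ¬(f d = true)), μ d := by
        rw [hqdef]
        refine Finset.sum_congr ?_ fun _ _ => rfl
        apply Finset.filter_congr
        intro d _
        simp [hfd]
      rw [hqp]
      linarith
  -- each conditional is at least M or M/r
  have hcond : ∀ d, (if f d = f dstar then M else M / r) ≤ lapCond f b μ i y d := by
    intro d
    by_cases hfd : f d = f dstar
    · rw [if_pos hfd, hMd, lapCond_congr f b μ i y hfd.symm]
    · rw [if_neg hfd]
      have := lapCond_le f hb hn μ hμ0 i y dstar d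
      rw [← hMd] at this
      rw [div_le_iff₀ hr0]
      linarith
  have hmarg_ge : ∑ d, μ d * (if f d = f dstar then M else M / r) ≤ lapMarg n f b μ y := by
    rw [lapMarg_decomp f b μ i y]
    exact Finset.sum_le_sum fun d _ => mul_le_mul_of_nonneg_left (hcond d) (hμ0 d)
  have hsplit : ∑ d, μ d * (if f d = f dstar then M else M / r) = q * M + (1 - q) * (M / r) := by
    rw [← Finset.sum_filter_add_sum_filter_not univ (fun d => f d = f dstar)
      (fun d => μ d * (if f d = f dstar then M else M / r))]
    have h1 : ∑ d ∈ Finset.univ.filter (fun d => f d = f dstar),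
        μ d * (if f d = f dstar then M else M / r) = q * M := by
      rw [hqdef, Finset.sum_mul]
      exact Finset.sum_congr rfl fun d hd => by
        rw [if_pos (Finset.mem_filter.mp hd).2]
    have h2 : ∑ d ∈ Finset.univ.filter (fun d => ¬(f d = f dstar)),
        μ d * (if f d = f dstar then M else M / r) = (1 - q) * (M / r) := by
      have hq1 : ∑ d ∈ Finset.univ.filter (fun d => ¬(f d = f dstar)), μ d = 1 - q := by
        have := Finset.sum_filter_add_sum_filter_not (univ : Finset 𝒟)
          (fun d => f d = f dstar) μ
        rw [hμ1, ← hqdef] at this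
        linarith
      rw [← hq1, Finset.sum_mul]
      exact Finset.sum_congr rfl fun d hd => by
        rw [if_neg (Finset.mem_filter.mp hd).2]
    rw [h1, h2]
  have hMr : M / r ≤ M := div_le_self hM.le hr1
  have hkey : M * (c + (1 - c) / r) ≤ lapMarg n f b μ y := by
    have h3 : M * (c + (1 - c) / r) ≤ q * M + (1 - q) * (M / r) := by
      have h4 : 0 ≤ (q - c) * (M - M / r) :=
        mul_nonneg (by linarith) (by linarith)
      have h5 : M * (c + (1 - c) / r) = c * M + (1 - c) * (M / r) := by ring
      nlinarith
    linarith [hsplit ▸ hmarg_ge]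
  have hcr : 0 < c + (1 - c) / r := by
    have : 0 < (1 - c) / r := div_pos (by linarith) hr0
    linarith
  have hmargpos : 0 < lapMarg n f b μ y := lt_of_lt_of_le (by positivity) hkey
  have hden : 0 < (1 - c) + c * r := by nlinarith
  have hratio : M / lapMarg n f b μ y ≤ r / ((1 - c) + c * r) := by
    rw [div_le_div_iff₀ hmargpos hden]
    have h6 : (1 - c) / r * r = 1 - c := div_mul_cancel₀ _ hr0.ne'
    have heq : M * ((1 - c) + c * r) = r * (M * (c + (1 - c) / r)) := by
      linear_combination (-M) * h6
    calc M * ((1 - c) + c * r) = r * (M * (c + (1 - c) / r)) := heq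
      _ ≤ r * lapMarg n f b μ y := mul_le_mul_of_nonneg_left hkey hr0.le
  rw [hMdef]
  calc Real.log (M / lapMarg n f b μ y) ≤ Real.log (r / ((1 - c) + c * r)) :=
        Real.log_le_log (div_pos hM hmargpos) hratio
    _ = 1 / ((n : ℝ) * b) - Real.log ((1 - c) + c * r) := by
        rw [Real.log_div hr0.ne' hden.ne', hrdef, Real.log_exp]
end
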